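/- arXiv:2012.15659 — 9 statements merged into one kernel-verified Lean document; each statement's English description precedes it below -/
import Mathlib

section
/- Let m ≥ 1 and let A be an invertible m×m complex matrix all of whose eigenvalues have modulus 1. Then there is a constant C > 0 such that for every nonzero integer n, ‖A^n‖ ≤ C·|n|^{m−1}, where A^n denotes the n-th power of A in GL_m(ℂ) (including negative powers) and ‖·‖ is the Frobenius (Euclidean) matrix norm. -/
/-!
By Cayley–Hamilton the characteristic polynomial `∏ μ, (X - μ) ^ k μ` annihilates `A`, and a
Bézout identity for its pairwise coprime factors splits `1 = ∑ μ, P μ` with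
`(A - μ) ^ k μ * P μ = 0`. Expanding `A ^ n * P μ = ((A - μ) + μ) ^ n * P μ` binomially, only the
terms of index `i < k μ ≤ m` survive, and each has size at most `choose n i * |μ| ^ (n - i) ≤
n ^ (m - 1)`. Negative powers are powers of `A⁻¹`, whose eigenvalues are the inverses of those of
`A`.
-/

/-- Frobenius (Euclidean) norm of a complex `m × m` matrix. -/
noncomputable def cmatnorm {m : ℕ} (A : Matrix (Fin m) (Fin m) ℂ) : ℝ :=
  Real.sqrt (∑ i, ∑ j, ‖A i j‖ ^ 2)

open Polynomial

theorem pow_mul_eq_sum_smul_sub_algebraMap_pow_mul {K R : Type*} [CommRing K] [Ring R]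
    [Algebra K R] (b P : R) (μ : K) (n : ℕ) :
    b ^ n * P = ∑ i ∈ Finset.range (n + 1),
      (μ ^ (n - i) * n.choose i) • ((b - algebraMap K R μ) ^ i * P) := by
  set N := b - algebraMap K R μ
  rw [← sub_add_cancel b (algebraMap K R μ), (Algebra.commute_algebraMap_right μ N).add_pow,
    Finset.sum_mul]
  refine Finset.sum_congr rfl fun i _ => ?_
  rw [mul_assoc (N ^ i), ← map_pow, ← map_natCast (algebraMap K R), ← map_mul,
    ← Algebra.commutes, mul_assoc, Algebra.smul_def]

theorem exists_sum_eq_one_of_aeval_eq_zero {K R : Type*} [Field K] [DecidableEq K] [Ring R]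
    [Algebra K R] {b : R} {p : K[X]} (hmonic : p.Monic) (hsplit : p.Splits)
    (hb : aeval b p = 0) :
    ∃ P : K → R, ∑ μ ∈ p.roots.toFinset, P μ = 1 ∧
      ∀ μ ∈ p.roots.toFinset, (b - algebraMap K R μ) ^ rootMultiplicity μ p * P μ = 0 := by
  set S := p.roots.toFinset
  set s : K → K[X] := fun μ => (X - C μ) ^ rootMultiplicity μ p
  have hprod : ∏ μ ∈ S, s μ = p := by
    rw [← prod_multiset_root_eq_finset_root, ← hsplit.eq_prod_roots_of_monic hmonic]
  rcases S.eq_empty_or_nonempty with hS | hS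
  · have hR : (1 : R) = 0 := by rw [← hb, ← hprod, hS, Finset.prod_empty, map_one]
    exact ⟨0, by rw [hS, Finset.sum_empty, hR], by simp [hS]⟩
  obtain ⟨q, hq⟩ := (exists_sum_eq_one_iff_pairwise_coprime hS (s := s)).mpr
    fun i j hij => (pairwise_coprime_X_sub_C Subtype.val_injective hij).pow
  refine ⟨fun μ => aeval b (q μ * ∏ ν ∈ S \ {μ}, s ν), by rw [← map_sum, hq, map_one],
    fun μ hμ => ?_⟩
  have hs : (b - algebraMap K R μ) ^ rootMultiplicity μ p = aeval b (s μ) := by simp [s]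
  rw [hs, ← map_mul, mul_left_comm, Finset.sdiff_singleton_eq_erase,
    Finset.mul_prod_erase S s hμ, hprod, map_mul, hb, mul_zero]

section NormedAlgebra

variable {𝕜 R : Type*} [NormedField 𝕜] [SeminormedRing R] [NormedAlgebra 𝕜 R]

theorem norm_pow_mul_le_of_sub_algebraMap_pow_mul_eq_zero {b P : R} {μ : 𝕜} (hμ : ‖μ‖ ≤ 1)
    {k : ℕ} (hk : (b - algebraMap 𝕜 R μ) ^ k * P = 0) {n : ℕ} (hn : 0 < n) :
    ‖b ^ n * P‖ ≤ n ^ (k - 1) * ∑ i ∈ Finset.range k, ‖(b - algebraMap 𝕜 R μ) ^ i * P‖ := by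
  set N := b - algebraMap 𝕜 R μ
  have hvanish : ∀ i, n < i ∨ k ≤ i → (n.choose i : ℝ) * ‖N ^ i * P‖ = 0 := by
    rintro i (hi | hi)
    · rw [Nat.choose_eq_zero_of_lt hi, Nat.cast_zero, zero_mul]
    · rw [← Nat.sub_add_cancel hi, pow_add, mul_assoc, hk, mul_zero, norm_zero, mul_zero]
  calc ‖b ^ n * P‖
      ≤ ∑ i ∈ Finset.range (n + 1), (n.choose i : ℝ) * ‖N ^ i * P‖ := by
        rw [pow_mul_eq_sum_smul_sub_algebraMap_pow_mul b P μ]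
        refine norm_sum_le_of_le _ fun i _ => (norm_smul_le _ _).trans ?_
        gcongr
        rw [norm_mul, norm_pow]
        refine (mul_le_of_le_one_left (norm_nonneg _) (pow_le_one₀ (norm_nonneg μ) hμ)).trans ?_
        simpa using Nat.norm_cast_le (α := 𝕜) (n.choose i)
    _ = ∑ i ∈ Finset.range (min (n + 1) k), (n.choose i : ℝ) * ‖N ^ i * P‖ := by
        refine (Finset.sum_subset (Finset.range_subset_range.mpr (min_le_left _ _))
          fun i hi hi' => hvanish i ?_).symm
        simp only [Finset.mem_range] at hi hi'
        omega
    _ = ∑ i ∈ Finset.range k, (n.choose i : ℝ) * ‖N ^ i * P‖ := by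
        refine Finset.sum_subset (Finset.range_subset_range.mpr (min_le_right _ _))
          fun i hi hi' => hvanish i ?_
        simp only [Finset.mem_range] at hi hi'
        omega
    _ ≤ ∑ i ∈ Finset.range k, (n : ℝ) ^ (k - 1) * ‖N ^ i * P‖ := by
        gcongr with i hi
        calc (n.choose i : ℝ) ≤ (n : ℝ) ^ i := mod_cast Nat.choose_le_pow n i
          _ ≤ (n : ℝ) ^ (k - 1) := by
            gcongr
            · exact mod_cast hn
            · exact Nat.le_sub_one_of_lt (Finset.mem_range.mp hi)
    _ = _ := (Finset.mul_sum _ _ _).symm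

theorem exists_norm_pow_le_of_aeval_eq_zero {b : R} {p : 𝕜[X]} (hmonic : p.Monic)
    (hsplit : p.Splits) (hb : aeval b p = 0) (hroots : ∀ μ ∈ p.roots, ‖μ‖ ≤ 1) :
    ∃ C > 0, ∀ n : ℕ, 0 < n → ‖b ^ n‖ ≤ C * n ^ (p.natDegree - 1) := by
  classical
  obtain ⟨P, hsum, hker⟩ := exists_sum_eq_one_of_aeval_eq_zero hmonic hsplit hb
  set S := p.roots.toFinset
  set D := ∑ μ ∈ S, ∑ i ∈ Finset.range (rootMultiplicity μ p), ‖(b - algebraMap 𝕜 R μ) ^ i * P μ‖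
  have hD : 0 ≤ D := by positivity
  refine ⟨D + 1, by positivity, fun n hn => ?_⟩
  have hmult : ∀ μ, rootMultiplicity μ p ≤ p.natDegree := fun μ =>
    count_roots (a := μ) p ▸ (Multiset.count_le_card _ _).trans (card_roots' p)
  calc ‖b ^ n‖ = ‖∑ μ ∈ S, b ^ n * P μ‖ := by rw [← Finset.mul_sum, hsum, mul_one]
    _ ≤ ∑ μ ∈ S, ‖b ^ n * P μ‖ := norm_sum_le _ _
    _ ≤ ∑ μ ∈ S, (n : ℝ) ^ (p.natDegree - 1) *
          ∑ i ∈ Finset.range (rootMultiplicity μ p), ‖(b - algebraMap 𝕜 R μ) ^ i * P μ‖ := by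
        refine Finset.sum_le_sum fun μ hμ => (norm_pow_mul_le_of_sub_algebraMap_pow_mul_eq_zero
          (hroots μ (Multiset.mem_toFinset.mp hμ)) (hker μ hμ) hn).trans ?_
        gcongr
        · exact mod_cast hn
        · exact hmult μ
    _ = (n : ℝ) ^ (p.natDegree - 1) * D := (Finset.mul_sum _ _ _).symm
    _ ≤ (D + 1) * n ^ (p.natDegree - 1) := by
        rw [mul_comm]
        gcongr
        linarith

end NormedAlgebra

section Frobenius

attribute [local instance] Matrix.frobeniusNormedAddCommGroup Matrix.frobeniusNormedRing
  Matrix.frobeniusNormedAlgebra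

theorem Matrix.exists_norm_pow_le_of_spectrum_subset_closedBall {ι : Type*} [Fintype ι]
    [DecidableEq ι] (B : Matrix ι ι ℂ) (hB : spectrum ℂ B ⊆ Metric.closedBall 0 1) :
    ∃ C > 0, ∀ n : ℕ, 0 < n → ‖B ^ n‖ ≤ C * n ^ (Fintype.card ι - 1) := by
  rw [← B.charpoly_natDegree_eq_dim]
  refine exists_norm_pow_le_of_aeval_eq_zero B.charpoly_monic (IsAlgClosed.splits _)
    B.aeval_self_charpoly fun μ hμ => ?_
  simpa using hB (Matrix.mem_spectrum_iff_isRoot_charpoly.mpr (isRoot_of_mem_roots hμ))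

theorem cmatnorm_eq_norm {m : ℕ} (A : Matrix (Fin m) (Fin m) ℂ) : cmatnorm A = ‖A‖ := by
  rw [cmatnorm, Matrix.frobenius_norm_def, Real.sqrt_eq_rpow]
  simp_rw [Real.rpow_two]

theorem exists_cmatnorm_pow_le_of_spectrum_subset_closedBall {m : ℕ}
    (B : Matrix (Fin m) (Fin m) ℂ) (hB : spectrum ℂ B ⊆ Metric.closedBall 0 1) :
    ∃ C > 0, ∀ n : ℕ, 0 < n → cmatnorm (B ^ n) ≤ C * n ^ (m - 1) := by
  simpa only [cmatnorm_eq_norm, Fintype.card_fin] using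
    B.exists_norm_pow_le_of_spectrum_subset_closedBall hB

end Frobenius

theorem stmt3_general {m : ℕ} (A : GL (Fin m) ℂ)
    (hev : ∀ μ : ℂ, (Matrix.charpoly (A : Matrix (Fin m) (Fin m) ℂ)).IsRoot μ →
      ‖μ‖ = 1) :
    ∃ C > (0 : ℝ), ∀ n : ℤ, n ≠ 0 →
      cmatnorm ((A ^ n : GL (Fin m) ℂ) : Matrix (Fin m) (Fin m) ℂ)
        ≤ C * |(n : ℝ)| ^ (m - 1) := by
  have hA : spectrum ℂ (A : Matrix (Fin m) (Fin m) ℂ) ⊆ Metric.sphere 0 1 := fun μ hμ => by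
    simpa using hev μ (Matrix.mem_spectrum_iff_isRoot_charpoly.mp hμ)
  have hA_inv : spectrum ℂ ((A⁻¹ : GL (Fin m) ℂ) : Matrix (Fin m) (Fin m) ℂ) ⊆
      Metric.sphere 0 1 := by
    rw [← spectrum.map_inv]
    intro μ hμ
    simpa using hA hμ
  obtain ⟨C₁, hC₁, h₁⟩ := exists_cmatnorm_pow_le_of_spectrum_subset_closedBall _
    (hA.trans Metric.sphere_subset_closedBall)
  obtain ⟨C₂, -, h₂⟩ := exists_cmatnorm_pow_le_of_spectrum_subset_closedBall _
    (hA_inv.trans Metric.sphere_subset_closedBall)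
  refine ⟨max C₁ C₂, lt_max_of_lt_left hC₁, fun n hn => ?_⟩
  obtain ⟨k, rfl | rfl⟩ := Int.eq_nat_or_neg n
  · have hk : 0 < k := by omega
    simpa using (h₁ k hk).trans (by gcongr; exact le_max_left _ _)
  · have hk : 0 < k := by omega
    simpa using (h₂ k hk).trans (by gcongr; exact le_max_right _ _)

theorem stmt3 {m : ℕ} (hm : 1 ≤ m) (A : GL (Fin m) ℂ)
    (hev : ∀ μ : ℂ, (Matrix.charpoly (A : Matrix (Fin m) (Fin m) ℂ)).IsRoot μ →
      ‖μ‖ = 1) :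
    ∃ C > (0 : ℝ), ∀ n : ℤ, n ≠ 0 →
      cmatnorm ((A ^ n : GL (Fin m) ℂ) : Matrix (Fin m) (Fin m) ℂ)
        ≤ C * |(n : ℝ)| ^ (m - 1) :=
  stmt3_general A hev
end

section
/- Let G be a discrete subgroup of SL(2,ℝ) (i.e. G carries the discrete topology as a topological subgroup of SL(2,ℝ)). Assume ∞ is a cusp of G, i.e. there exists h ≠ 0 with the matrix (1 h; 0 1) ∈ G. Let 𝔠 ∈ ℝ be a cusp of G, i.e. there exists a parabolic element γ = (a b; c d) ∈ G (γ ≠ ±I, |a+d| = 2) fixing 𝔠: c·𝔠² + (d−a)·𝔠 − b = 0. Suppose 𝔠 and ∞ are inequivalent cusps, i.e. there is no γ = (a b; c d) ∈ G with c·𝔠 + d = 0. Then there exists δ > 0 such that |c·𝔠 + d| ≥ δ for every γ = (a b; c d) ∈ G. -/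
/-!
The parabolic element of `G` fixing `𝔠` has a square of the form `1 + s • (𝔠, 1)ᵀ (1, -𝔠)`
with `s ≠ 0`. Conjugating it by `g ∈ G` gives `1 + s • (u, v)ᵀ (v, -u)` with
`(u, v) = g • (𝔠, 1)`, so `v = c 𝔠 + d`. If these denominators could be made arbitrarily small,
then, after translating `g` by powers of `(1 h; 0 1)` so that also `|u| ≤ |h| |v| / 2`, the
conjugates would be elements of `G` different from `1` accumulating at `1`, contradicting
discreteness.
-/

open scoped MatrixGroups
open Filter Topology

theorem Filter.Tendsto.eventually_eq_of_discreteTopology {X ι : Type*} [TopologicalSpace X]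
    {S : Set X} [DiscreteTopology S] {l : Filter ι} {f : ι → X} {x : X} (hx : x ∈ S)
    (hf : ∀ᶠ n in l, f n ∈ S) (h : Tendsto f l (𝓝 x)) : ∀ᶠ n in l, f n = x := by
  obtain ⟨U, hU, hUS⟩ := discreteTopology_subtype_iff'.mp ‹_› x hx
  filter_upwards [h (hU.mem_nhds (hUS.symm.subset rfl).1), hf] with n hnU hnS
  exact hUS.subset ⟨hnU, hnS⟩

theorem exists_int_abs_add_mul_le {K : Type*} [Field K] [LinearOrder K] [IsStrictOrderedRing K]
    [FloorRing K] (u : K) {w : K} (hw : w ≠ 0) : ∃ k : ℤ, |u + k * w| ≤ |w| / 2 := by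
  refine ⟨-round (u / w), ?_⟩
  have hsplit : u + ((-round (u / w) : ℤ) : K) * w = w * (u / w - round (u / w)) := by
    push_cast; field_simp; ring
  rw [hsplit, abs_mul]
  nlinarith [abs_sub_round (u / w), abs_nonneg w]

namespace Matrix

variable {R : Type*} [CommRing R]

/-- `1 + s • (u, v)ᵀ (v, -u)`, the parabolic matrix fixing `u / v`. -/
def parabolic (u v s : R) : Matrix (Fin 2) (Fin 2) R :=
  !![1 + s * u * v, -(s * u ^ 2); s * v ^ 2, 1 - s * u * v]

theorem parabolic_ne_one [NoZeroDivisors R] (u : R) {v s : R} (hv : v ≠ 0) (hs : s ≠ 0) :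
    parabolic u v s ≠ 1 := fun h => by
  simpa [parabolic, hv, hs] using congrFun (congrFun h 1) 0

theorem tendsto_parabolic [TopologicalSpace R] [IsTopologicalRing R] {ι : Type*} {l : Filter ι}
    {u v : ι → R} (hu : Tendsto u l (𝓝 0)) (hv : Tendsto v l (𝓝 0)) (s : R) :
    Tendsto (fun n => parabolic (u n) (v n) s) l (𝓝 1) := by
  have hcont : Continuous fun p : R × R => parabolic p.1 p.2 s := by
    refine continuous_matrix fun i j => ?_
    fin_cases i <;> fin_cases j <;> simp [parabolic] <;> fun_prop
  have h0 : parabolic (0 : R) 0 s = 1 := by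
    ext i j; fin_cases i <;> fin_cases j <;> simp [parabolic]
  have := (hcont.tendsto (0, 0)).comp (hu.prodMk_nhds hv)
  rwa [h0] at this

namespace SpecialLinearGroup

theorem coe_mul_parabolic_mul_inv (g : SL(2, R)) (u v s : R) :
    (g : Matrix (Fin 2) (Fin 2) R) * parabolic u v s * ((g⁻¹ : SL(2, R)) : Matrix (Fin 2) (Fin 2) R)
      = parabolic (g 0 0 * u + g 0 1 * v) (g 1 0 * u + g 1 1 * v) s := by
  have hdet : g 0 0 * g 1 1 - g 0 1 * g 1 0 = 1 := by rw [← det_fin_two]; exact g.det_coe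
  rw [coe_inv, adjugate_fin_two]
  ext i j
  fin_cases i <;> fin_cases j <;> simp [parabolic, mul_apply, Fin.sum_univ_two] <;>
    first | linear_combination hdet | linear_combination -hdet | ring

theorem coe_zpow_of_coe_eq_translation {T : SL(2, R)} {h : R}
    (hT : (T : Matrix (Fin 2) (Fin 2) R) = !![1, h; 0, 1]) (k : ℤ) :
    ((T ^ k : SL(2, R)) : Matrix (Fin 2) (Fin 2) R) = !![1, k * h; 0, 1] := by
  have hT_inv : ((T⁻¹ : SL(2, R)) : Matrix (Fin 2) (Fin 2) R) = !![1, -h; 0, 1] := by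
    simp [coe_inv, hT, adjugate_fin_two]
  induction k with
  | zero => rw [zpow_zero, coe_one, one_fin_two]; simp
  | succ n ih =>
    rw [_root_.zpow_add_one, coe_mul, ih, hT, mul_fin_two]
    congr <;> push_cast <;> ring
  | pred n ih =>
    rw [_root_.zpow_sub_one, coe_mul, ih, hT_inv, mul_fin_two]
    congr <;> push_cast <;> ring

theorem coe_mul_self_eq_parabolic {K : Type*} [Field K] [LinearOrder K] [IsStrictOrderedRing K]
    (γ : SL(2, K)) (x : K) (hne_one : (γ : Matrix (Fin 2) (Fin 2) K) ≠ 1)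
    (hne_neg_one : (γ : Matrix (Fin 2) (Fin 2) K) ≠ -1)
    (htr : |trace (γ : Matrix (Fin 2) (Fin 2) K)| = 2)
    (hfix : γ 1 0 * x ^ 2 + (γ 1 1 - γ 0 0) * x - γ 0 1 = 0) :
    γ 1 0 * trace (γ : Matrix (Fin 2) (Fin 2) K) ≠ 0 ∧
      ((γ * γ : SL(2, K)) : Matrix (Fin 2) (Fin 2) K) =
        parabolic x 1 (γ 1 0 * trace (γ : Matrix (Fin 2) (Fin 2) K)) := by
  rw [trace_fin_two] at htr ⊢
  have hdet : γ 0 0 * γ 1 1 - γ 0 1 * γ 1 0 = 1 := by rw [← det_fin_two]; exact γ.det_coe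
  have htr_sq : (γ 0 0 + γ 1 1) ^ 2 = 4 := by rw [← sq_abs, htr]; norm_num
  -- the fixed-point equation has discriminant `tr² - 4 = 0`, hence a double root
  have hd : γ 1 1 = γ 0 0 - 2 * γ 1 0 * x := by
    have hsq : (2 * γ 1 0 * x + γ 1 1 - γ 0 0) ^ 2 = 0 := by
      linear_combination 4 * γ 1 0 * hfix + htr_sq - 4 * hdet
    linear_combination pow_eq_zero_iff two_ne_zero |>.mp hsq
  have hb : γ 0 1 = -(γ 1 0 * x ^ 2) := by linear_combination -hfix + x * hd
  have hc : γ 1 0 ≠ 0 := by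
    intro hc
    rw [hc] at hd hb
    have ha : (γ 0 0 - 1) * (γ 0 0 + 1) = 0 := by
      rw [hd] at htr_sq; linear_combination htr_sq / 4
    rcases mul_eq_zero.mp ha with ha | ha
    · refine hne_one (Matrix.ext fun i j => ?_)
      fin_cases i <;> fin_cases j <;> simp [hb, hc, hd] <;> linear_combination ha
    · refine hne_neg_one (Matrix.ext fun i j => ?_)
      fin_cases i <;> fin_cases j <;> simp [hb, hc, hd] <;> linear_combination ha
  refine ⟨mul_ne_zero hc fun h0 => by simp [h0] at htr, ?_⟩
  have ha : (γ 0 0 - γ 1 0 * x) ^ 2 = 1 := by rw [hd] at htr_sq; linear_combination htr_sq / 4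
  rw [coe_mul]
  ext i j
  fin_cases i <;> fin_cases j <;> simp [parabolic, mul_apply, Fin.sum_univ_two, hb, hd] <;>
    first | linear_combination ha | linear_combination -ha | ring

theorem exists_mem_coe_eq_parabolic_abs_le {G : Subgroup SL(2, ℝ)} {T P γ : SL(2, ℝ)} {h x s : ℝ}
    (hT : T ∈ G) (hTm : (T : Matrix (Fin 2) (Fin 2) ℝ) = !![1, h; 0, 1]) (hh : h ≠ 0)
    (hP : P ∈ G) (hPm : (P : Matrix (Fin 2) (Fin 2) ℝ) = parabolic x 1 s)
    (hγ : γ ∈ G) (hv : γ 1 0 * x + γ 1 1 ≠ 0) :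
    ∃ β ∈ G, ∃ u : ℝ, |u| ≤ |h| * |γ 1 0 * x + γ 1 1| / 2 ∧
      (β : Matrix (Fin 2) (Fin 2) ℝ) = parabolic u (γ 1 0 * x + γ 1 1) s := by
  obtain ⟨k, hk⟩ := exists_int_abs_add_mul_le (γ 0 0 * x + γ 0 1) (mul_ne_zero hh hv)
  have hg : T ^ k * γ ∈ G := G.mul_mem (G.zpow_mem hT k) hγ
  refine ⟨T ^ k * γ * P * (T ^ k * γ)⁻¹, G.mul_mem (G.mul_mem hg hP) (G.inv_mem hg), _,
    by rwa [abs_mul] at hk, ?_⟩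
  rw [coe_mul, coe_mul, hPm, coe_mul_parabolic_mul_inv, coe_mul, coe_zpow_of_coe_eq_translation hTm]
  simp only [mul_apply, Fin.sum_univ_two, Fin.isValue, of_apply, cons_val', cons_val_zero,
    cons_val_fin_one, one_mul, cons_val_one, mul_one, zero_mul, zero_add]
  congr 1
  ring

end SpecialLinearGroup

end Matrix

open Matrix Matrix.SpecialLinearGroup

theorem stmt6 (G : Subgroup SL(2, ℝ))
    (hdisc : DiscreteTopology
      ((fun g : SL(2, ℝ) => (g : Matrix (Fin 2) (Fin 2) ℝ)) '' (G : Set SL(2, ℝ))))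
    (hinf : ∃ h : ℝ, h ≠ 0 ∧ ∃ γ ∈ G,
      (γ : Matrix (Fin 2) (Fin 2) ℝ) = !![1, h; 0, 1])
    (𝔠 : ℝ)
    (hcusp : ∃ γ ∈ G,
      (γ : Matrix (Fin 2) (Fin 2) ℝ) ≠ 1 ∧
      (γ : Matrix (Fin 2) (Fin 2) ℝ) ≠ -1 ∧
      |Matrix.trace ((γ : Matrix (Fin 2) (Fin 2) ℝ))| = 2 ∧
      (γ : Matrix (Fin 2) (Fin 2) ℝ) 1 0 * 𝔠 ^ 2
        + ((γ : Matrix (Fin 2) (Fin 2) ℝ) 1 1 - (γ : Matrix (Fin 2) (Fin 2) ℝ) 0 0) * 𝔠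
        - (γ : Matrix (Fin 2) (Fin 2) ℝ) 0 1 = 0)
    (hineq : ∀ γ ∈ G,
      (γ : Matrix (Fin 2) (Fin 2) ℝ) 1 0 * 𝔠 + (γ : Matrix (Fin 2) (Fin 2) ℝ) 1 1 ≠ 0) :
    ∃ δ > (0 : ℝ), ∀ γ ∈ G,
      δ ≤ |(γ : Matrix (Fin 2) (Fin 2) ℝ) 1 0 * 𝔠 + (γ : Matrix (Fin 2) (Fin 2) ℝ) 1 1| := by
  by_contra! hsmall
  obtain ⟨h, hh, T, hT, hTm⟩ := hinf
  obtain ⟨γ₀, hγ₀, hne_one, hne_neg_one, htr, hfix⟩ := hcusp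
  obtain ⟨hs, hsq⟩ := coe_mul_self_eq_parabolic γ₀ 𝔠 hne_one hne_neg_one htr hfix
  choose γ hγ hγ_small using fun n : ℕ => hsmall (1 / (n + 1)) Nat.one_div_pos_of_nat
  choose β hβ u hu hβu using fun n => exists_mem_coe_eq_parabolic_abs_le hT hTm hh
    (G.mul_mem hγ₀ hγ₀) hsq (hγ n) (hineq _ (hγ n))
  have hv : Tendsto (fun n => γ n 1 0 * 𝔠 + γ n 1 1) atTop (𝓝 0) :=
    squeeze_zero_norm (fun n => (hγ_small n).le) tendsto_one_div_add_atTop_nhds_zero_nat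
  have hu : Tendsto u atTop (𝓝 0) :=
    squeeze_zero_norm hu (by simpa using (hv.norm.const_mul |h|).div_const 2)
  have hβ_tendsto : Tendsto (fun n => (β n : Matrix (Fin 2) (Fin 2) ℝ)) atTop (𝓝 1) :=
    (tendsto_parabolic hu hv _).congr fun n => (hβu n).symm
  obtain ⟨n, hn⟩ := (hβ_tendsto.eventually_eq_of_discreteTopology
    (Set.mem_image_of_mem (fun g : SL(2, ℝ) => (g : Matrix (Fin 2) (Fin 2) ℝ)) G.one_mem)
    (.of_forall fun n => Set.mem_image_of_mem _ (hβ n))).exists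
  exact parabolic_ne_one _ (hineq _ (hγ n)) hs ((hβu n).symm.trans hn)
end

section
/- Let c, d, 𝔠 ∈ ℝ and K > 0. Let z = u + iv ∈ ℂ with v > 0 and |u − 𝔠| ≤ K·v. Then |c·z + d| ≥ |c·𝔠 + d| / √(K² + 1). -/
/-! By the triangle inequality, moving from `z` to the vertex `𝔠` changes `c z + d` by
`c (𝔠 - z.re) - i c z.im`, whose real part is at most `K |c| z.im` in size. Hence
`|c 𝔠 + d| ≤ |c z.re + d| + K |c| z.im`, and Cauchy–Schwarz for the vectors `(1, K)` and
`(|c z.re + d|, |c| z.im)` bounds the right-hand side by `√(K² + 1) ‖c z + d‖`. -/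

theorem Real.mul_add_mul_le_sqrt_mul_sqrt (a b x y : ℝ) :
    a * x + b * y ≤ √(a ^ 2 + b ^ 2) * √(x ^ 2 + y ^ 2) := by
  rw [← Real.sqrt_mul (by positivity)]
  exact (le_abs_self _).trans (Real.abs_le_sqrt (by nlinarith [sq_nonneg (a * y - b * x)]))

theorem Complex.norm_ofReal_mul_add_ofReal (c d : ℝ) (z : ℂ) :
    ‖(c : ℂ) * z + d‖ = √((c * z.re + d) ^ 2 + (c * z.im) ^ 2) := by
  simp [Complex.norm_eq_sqrt_sq_add_sq]

theorem abs_mul_add_le_sqrt_mul_norm_of_abs_re_sub_le (c d 𝔠 K : ℝ) (z : ℂ)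
    (hz : |z.re - 𝔠| ≤ K * z.im) :
    |c * 𝔠 + d| ≤ √(K ^ 2 + 1) * ‖(c : ℂ) * z + d‖ := by
  have htriangle : |c * 𝔠 + d| ≤ |c * z.re + d| + |c| * |z.re - 𝔠| := by
    rw [← abs_mul, show c * 𝔠 + d = (c * z.re + d) - c * (z.re - 𝔠) by ring]
    exact abs_sub _ _
  calc |c * 𝔠 + d| ≤ 1 * |c * z.re + d| + K * (|c| * z.im) := by
        linarith [mul_le_mul_of_nonneg_left hz (abs_nonneg c)]
    _ ≤ √(1 ^ 2 + K ^ 2) * √(|c * z.re + d| ^ 2 + (|c| * z.im) ^ 2) :=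
        Real.mul_add_mul_le_sqrt_mul_sqrt _ _ _ _
    _ = √(K ^ 2 + 1) * ‖(c : ℂ) * z + d‖ := by
        rw [Complex.norm_ofReal_mul_add_ofReal, sq_abs, mul_pow, sq_abs, ← mul_pow, add_comm (1 ^ 2),
          one_pow]

theorem stmt8_general (c d 𝔠 K u v : ℝ)
    (hu : |u - 𝔠| ≤ K * v) :
    |c * 𝔠 + d| / Real.sqrt (K ^ 2 + 1)
      ≤ ‖(c : ℂ) * (u + v * Complex.I) + d‖ := by
  have hz : |(u + v * Complex.I).re - 𝔠| ≤ K * (u + v * Complex.I).im := by simpa using hu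
  rw [div_le_iff₀' (Real.sqrt_pos.mpr (by positivity))]
  exact abs_mul_add_le_sqrt_mul_norm_of_abs_re_sub_le c d 𝔠 K _ hz

theorem stmt8 (c d 𝔠 K u v : ℝ) (hK : 0 < K) (hv : 0 < v)
    (hu : |u - 𝔠| ≤ K * v) :
    |c * 𝔠 + d| / Real.sqrt (K ^ 2 + 1)
      ≤ ‖(c : ℂ) * (u + v * Complex.I) + d‖ :=
  stmt8_general c d 𝔠 K u v hu
end

section
/- Let h > 0, Λ ∈ ℝ, Y > 0, and let f be a holomorphic function on the half-plane {τ ∈ ℂ : Im τ > Y} satisfying f(τ + h) = exp(2πiΛ)·f(τ) for all τ with Im τ > Y. Suppose f has moderate growth at ∞, i.e. there exist ν ∈ ℝ and Y′ > Y such that |f(τ)| < exp(ν·Im τ) whenever Im τ > Y′. Then there exist an integer M and complex numbers f_[n] for n ≥ −M such that for every τ with Im τ > Y, exp(−2πiΛτ/h)·f(τ) = Σ_{n=−M}^{∞} f_[n]·exp(2πinτ/h), and this series converges absolutely for Im τ > Y. -/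
/-!
Multiplying `f` by `exp (2πi (N - Λ) τ / h)` for an integer `N ≥ Λ + ν h / (2π)` gives a function
`G` that is `h`-periodic, holomorphic on `Im τ > Y` and bounded as `Im τ → ∞`. Hence
`G τ = F (q)` with `q = exp (2πiτ/h)`, where `F` is holomorphic on the punctured disc
`0 < |q| < exp (-2πY/h)` and, by Riemann's removable singularity theorem, also at `q = 0`.
The Taylor series of `F` at `0` converges absolutely on the whole disc; dividing it by `q ^ N`
gives the expansion with `M = N`.
-/

open Complex Filter Asymptotics Function Metric Nat
open scoped Real Topology

local notation "I∞" => comap Complex.im atTop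

local notation "𝕢" => Periodic.qParam

namespace Complex

theorem summable_norm_taylorSeries_on_ball {f : ℂ → ℂ} {c z : ℂ} {r : ℝ}
    (hf : DifferentiableOn ℂ f (ball c r)) (hz : z ∈ ball c r) :
    Summable fun n : ℕ ↦ ‖(n ! : ℂ)⁻¹ • (z - c) ^ n • iteratedDeriv n f c‖ := by
  -- the Taylor series converges at the point `c + ‖z - c‖`, where its terms have the same norms
  have hz' : c + ‖z - c‖ ∈ ball c r := by
    rwa [mem_ball_iff_norm, add_sub_cancel_left, norm_real, Real.norm_of_nonneg (norm_nonneg _),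
      ← mem_ball_iff_norm]
  refine (hasSum_taylorSeries_on_ball hf hz').summable.norm.congr fun n ↦ ?_
  simp

theorem norm_exp_two_pi_I_mul_div (h s : ℝ) (τ : ℂ) :
    ‖cexp (2 * π * I * s * τ / h)‖ = Real.exp (-2 * π * s * τ.im / h) := by
  have := Periodic.norm_qParam h (s * τ)
  simp only [Periodic.qParam, ← mul_assoc, im_ofReal_mul] at this
  exact this

theorem exp_two_pi_I_mul_add_div {h : ℝ} (hh : h ≠ 0) (s τ : ℂ) :
    cexp (2 * π * I * s * (τ + h) / h) =
      cexp (2 * π * I * s * τ / h) * cexp (2 * π * I * s) := by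
  have : (h : ℂ) ≠ 0 := ofReal_ne_zero.mpr hh
  rw [← exp_add]
  congr 1
  field_simp

end Complex

theorem periodic_indicator {α β : Type*} [Add α] [Zero β] {s : Set α} {g : α → β} {c : α}
    (hs : ∀ x, x + c ∈ s ↔ x ∈ s) (hg : ∀ x ∈ s, g (x + c) = g x) :
    Periodic (s.indicator g) c := by
  intro x
  by_cases hx : x ∈ s
  · rw [Set.indicator_of_mem hx, Set.indicator_of_mem ((hs x).mpr hx), hg x hx]
  · rw [Set.indicator_of_notMem hx, Set.indicator_of_notMem (mt (hs x).mp hx)]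

theorem IsOpen.differentiableAt_indicator {𝕜 E F : Type*} [NontriviallyNormedField 𝕜]
    [NormedAddCommGroup E] [NormedSpace 𝕜 E] [NormedAddCommGroup F] [NormedSpace 𝕜 F]
    {s : Set E} {g : E → F} {x : E} (hs : IsOpen s) (hg : DifferentiableOn 𝕜 g s)
    (hx : x ∈ s) : DifferentiableAt 𝕜 (s.indicator g) x :=
  (hg.differentiableAt (hs.mem_nhds hx)).congr_of_eventuallyEq
    (eventually_of_mem (hs.mem_nhds hx) fun _ hy ↦ Set.indicator_of_mem hy g)

namespace Function.Periodic

variable {h Y : ℝ} {G : ℂ → ℂ}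

theorem differentiableOn_cuspFunction_ball (hh : 0 < h) (hG : Periodic G h)
    (hdiff : ∀ τ : ℂ, Y < τ.im → DifferentiableAt ℂ G τ) (hbd : BoundedAtFilter I∞ G) :
    DifferentiableOn ℂ (cuspFunction h G) (ball 0 (Real.exp (-2 * π * Y / h))) := by
  intro q hq
  rw [mem_ball_zero_iff] at hq
  refine DifferentiableAt.differentiableWithinAt ?_
  rcases eq_or_ne q 0 with rfl | hq0
  · exact hG.differentiableAt_cuspFunction_zero hh
      (eventually_of_mem (preimage_mem_comap (Ioi_mem_atTop Y)) hdiff) hbd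
  · rw [← qParam_right_inv hh.ne' hq0] at hq ⊢
    exact hG.differentiableAt_cuspFunction hh.ne' (hdiff _ ((norm_qParam_lt_iff hh Y _).mp hq))

theorem exists_summable_hasSum_qParam_pow (hh : 0 < h) (hG : Periodic G h)
    (hdiff : ∀ τ : ℂ, Y < τ.im → DifferentiableAt ℂ G τ) (hbd : BoundedAtFilter I∞ G) :
    ∃ a : ℕ → ℂ, ∀ τ : ℂ, Y < τ.im →
      Summable (fun n ↦ ‖a n * 𝕢 h τ ^ n‖) ∧
        HasSum (fun n ↦ a n * 𝕢 h τ ^ n) (G τ) := by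
  have hF := hG.differentiableOn_cuspFunction_ball hh hdiff hbd
  refine ⟨fun n ↦ (n ! : ℂ)⁻¹ * iteratedDeriv n (cuspFunction h G) 0, fun τ hτ ↦ ?_⟩
  have hq : 𝕢 h τ ∈ ball 0 (Real.exp (-2 * π * Y / h)) := by
    rw [mem_ball_zero_iff]
    exact (norm_qParam_lt_iff hh Y τ).mpr hτ
  have hterm : ∀ n : ℕ,
      (n ! : ℂ)⁻¹ • (𝕢 h τ - 0) ^ n • iteratedDeriv n (cuspFunction h G) 0 =
        (n ! : ℂ)⁻¹ * iteratedDeriv n (cuspFunction h G) 0 * 𝕢 h τ ^ n := by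
    intro n
    simp only [sub_zero, smul_eq_mul]
    ring
  refine ⟨?_, ?_⟩
  · simpa only [hterm] using summable_norm_taylorSeries_on_ball hF hq
  · rw [← eq_cuspFunction hh.ne' hG τ]
    simpa only [hterm] using hasSum_taylorSeries_on_ball hF hq

end Function.Periodic

section Twisted

variable {f : ℂ → ℂ} {h Λ Y : ℝ}

theorem boundedAtFilter_exp_mul_of_norm_lt_exp {ν s : ℝ} (hs : ν ≤ 2 * π * s / h)
    (hgr : ∀ τ : ℂ, Y < τ.im → ‖f τ‖ < Real.exp (ν * τ.im)) :
    BoundedAtFilter I∞ (fun τ ↦ cexp (2 * π * I * s * τ / h) * f τ) := by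
  refine IsBigO.of_bound 1 ?_
  filter_upwards [preimage_mem_comap (Ioi_mem_atTop (max Y 0))] with τ hτ
  obtain ⟨hYτ, hτ0⟩ : Y < τ.im ∧ 0 < τ.im := max_lt_iff.mp hτ
  rw [Pi.one_apply, norm_one, mul_one]
  calc ‖cexp (2 * π * I * s * τ / h) * f τ‖
      ≤ Real.exp (-2 * π * s * τ.im / h) * Real.exp (ν * τ.im) := by
        rw [norm_mul, norm_exp_two_pi_I_mul_div]
        gcongr
        exact (hgr τ hYτ).le
    _ = Real.exp (τ.im * (ν - 2 * π * s / h)) := by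
        rw [← Real.exp_add]
        ring_nf
    _ ≤ 1 := Real.exp_le_one_iff.mpr (mul_nonpos_of_nonneg_of_nonpos hτ0.le (by linarith))

theorem exists_periodic_eq_exp_mul_of_twisted {ν Y' : ℝ} (hh : 0 < h)
    (hf : DifferentiableOn ℂ f {τ : ℂ | Y < τ.im})
    (hper : ∀ τ : ℂ, Y < τ.im → f (τ + h) = cexp (2 * π * I * Λ) * f τ)
    (hgr : ∀ τ : ℂ, Y' < τ.im → ‖f τ‖ < Real.exp (ν * τ.im)) :
    ∃ N : ℕ, ∃ G : ℂ → ℂ, Periodic G h ∧ (∀ τ : ℂ, Y < τ.im → DifferentiableAt ℂ G τ) ∧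
      BoundedAtFilter I∞ G ∧ ∀ τ : ℂ, Y < τ.im →
        cexp (-(2 * π * I * Λ * τ / h)) * f τ = cexp (-(2 * π * I * N * τ / h)) * G τ := by
  obtain ⟨N, hN⟩ := exists_nat_ge (Λ + ν * h / (2 * π))
  set U := {τ : ℂ | Y < τ.im}
  set g : ℂ → ℂ := fun τ ↦ cexp (2 * π * I * (N - Λ : ℝ) * τ / h) * f τ
  have hgper : ∀ τ ∈ U, g (τ + h) = g τ := by
    intro τ hτ
    have hone : cexp (2 * π * I * (N - Λ : ℝ)) * cexp (2 * π * I * Λ) = 1 := by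
      rw [← exp_add, ← exp_nat_mul_two_pi_mul_I N]
      push_cast
      ring_nf
    simp only [g, exp_two_pi_I_mul_add_div hh.ne', hper τ hτ]
    linear_combination cexp (2 * π * I * (N - Λ : ℝ) * τ / h) * f τ * hone
  have hgdiff : DifferentiableOn ℂ g U := by
    refine DifferentiableOn.mul (Differentiable.differentiableOn ?_) hf
    fun_prop
  have hNΛ : ν ≤ 2 * π * (N - Λ : ℝ) / h := by
    rw [le_div_iff₀ hh]
    have := (div_le_iff₀ (by positivity)).mp (show ν * h / (2 * π) ≤ N - Λ by linarith)
    linarith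
  have hU : U ∈ I∞ := preimage_mem_comap (Ioi_mem_atTop Y)
  -- extending `g` by `0` off the half-plane makes it periodic on all of `ℂ`
  refine ⟨N, U.indicator g, periodic_indicator (by simp [U]) hgper,
    fun τ hτ ↦ (isOpen_lt continuous_const continuous_im).differentiableAt_indicator hgdiff hτ,
    (boundedAtFilter_exp_mul_of_norm_lt_exp hNΛ hgr).congr'
      (eventually_of_mem hU fun τ hτ ↦ (Set.indicator_of_mem hτ g).symm) EventuallyEq.rfl,
    fun τ hτ ↦ ?_⟩
  rw [Set.indicator_of_mem (s := U) hτ, ← mul_assoc, ← exp_add]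
  push_cast
  ring_nf

end Twisted

theorem stmt9_general (h : ℝ) (hh : 0 < h) (Λ Y : ℝ) (f : ℂ → ℂ)
    (hf : DifferentiableOn ℂ f {τ : ℂ | Y < τ.im})
    (hper : ∀ τ : ℂ, Y < τ.im →
      f (τ + h) = Complex.exp (2 * Real.pi * Complex.I * Λ) * f τ)
    (hgrow : ∃ ν : ℝ, ∃ Y' : ℝ, Y < Y' ∧
      ∀ τ : ℂ, Y' < τ.im → ‖f τ‖ < Real.exp (ν * τ.im)) :
    ∃ M : ℤ, ∃ a : ℕ → ℂ, ∀ τ : ℂ, Y < τ.im →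
      Summable (fun n : ℕ =>
        ‖a n * Complex.exp (2 * Real.pi * Complex.I * ((n : ℂ) - M) * τ / h)‖) ∧
      Complex.exp (-(2 * Real.pi * Complex.I * Λ * τ / h)) * f τ
        = ∑' n : ℕ, a n * Complex.exp (2 * Real.pi * Complex.I * ((n : ℂ) - M) * τ / h) := by
  obtain ⟨ν, Y', -, hgr⟩ := hgrow
  obtain ⟨N, G, hGper, hGdiff, hGbd, hfG⟩ :=
    exists_periodic_eq_exp_mul_of_twisted hh hf hper hgr
  obtain ⟨a, ha⟩ := hGper.exists_summable_hasSum_qParam_pow hh hGdiff hGbd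
  refine ⟨N, a, fun τ hτ ↦ ?_⟩
  obtain ⟨hsum, hhas⟩ := ha τ hτ
  have hexp : ∀ n : ℕ, cexp (2 * π * I * ((n : ℂ) - (N : ℤ)) * τ / h) =
      𝕢 h τ ^ n * cexp (-(2 * π * I * N * τ / h)) := by
    intro n
    rw [Periodic.qParam, ← exp_nat_mul, ← exp_add]
    push_cast
    ring_nf
  simp only [hexp, ← mul_assoc]
  refine ⟨?_, ?_⟩
  · simpa only [norm_mul] using hsum.mul_right ‖cexp (-(2 * π * I * N * τ / h))‖
  · rw [(hhas.mul_right _).tsum_eq, hfG τ hτ, mul_comm]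

theorem stmt9 (h : ℝ) (hh : 0 < h) (Λ Y : ℝ) (hY : 0 < Y) (f : ℂ → ℂ)
    (hf : DifferentiableOn ℂ f {τ : ℂ | Y < τ.im})
    (hper : ∀ τ : ℂ, Y < τ.im →
      f (τ + h) = Complex.exp (2 * Real.pi * Complex.I * Λ) * f τ)
    (hgrow : ∃ ν : ℝ, ∃ Y' : ℝ, Y < Y' ∧
      ∀ τ : ℂ, Y' < τ.im → ‖f τ‖ < Real.exp (ν * τ.im)) :
    ∃ M : ℤ, ∃ a : ℕ → ℂ, ∀ τ : ℂ, Y < τ.im →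
      Summable (fun n : ℕ =>
        ‖a n * Complex.exp (2 * Real.pi * Complex.I * ((n : ℂ) - M) * τ / h)‖) ∧
      Complex.exp (-(2 * Real.pi * Complex.I * Λ * τ / h)) * f τ
        = ∑' n : ℕ, a n * Complex.exp (2 * Real.pi * Complex.I * ((n : ℂ) - M) * τ / h) :=
  stmt9_general h hh Λ Y f hf hper hgrow
end

section
/- Let m ≥ 1, h > 0, Y > 0. Let P ∈ GL_m(ℂ), let μ₁, …, μ_m ∈ [0,1), and set A = P·diag(exp(2πiμ₁), …, exp(2πiμ_m))·P^{−1} ∈ GL_m(ℂ). Let X : {τ ∈ ℂ : Im τ > Y} → ℂ^m be holomorphic (componentwise) with X(τ + h) = A·X(τ) for all τ with Im τ > Y, and suppose X has moderate growth at ∞: there exist ν ∈ ℝ and Y′ > Y such that ‖X(τ)‖ < exp(ν·Im τ) whenever Im τ > Y′. Then there exist an integer M and vectors X_[n] ∈ ℂ^m for n ≥ −M such that for every τ with Im τ > Y, X(τ) = P·diag(q̃^{μ₁}, …, q̃^{μ_m})·P^{−1}·Σ_{n=−M}^{∞} X_[n]·q̃^n, where q̃ = exp(2πiτ/h), q̃^{μ}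 = exp(2πiμτ/h), and the series converges absolutely for Im τ > Y. -/
/-!
Applying `P⁻¹` and dividing the `i`-th coordinate by `exp (2πi μᵢ τ / h)` turns `X` into `m`
scalar functions that are holomorphic and `h`-periodic on `Im τ > Y` and still grow at most like
`exp (ν' Im τ)`. Multiplied by `q̃^M` with `2πM/h ≥ ν'`, such a function is bounded as
`Im τ → ∞`, so as a function of `q̃` on the punctured disc `|q̃| < exp (-2πY/h)` it has a
removable singularity at `0`; its Taylor series there, divided by `q̃^M`, is the required
expansion.
-/

open Complex Filter Function Asymptotics Metric Matrix
open Function.Periodic (qParam invQParam cuspFunction qParam_ne_zero qParam_right_inv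
  qParam_left_inv_mod_period norm_qParam norm_qParam_lt_iff differentiable_qParam eq_cuspFunction)
open scoped Real

/-- Euclidean norm on `ℂ^m`. -/
noncomputable def vnorm {m : ℕ} (v : Fin m → ℂ) : ℝ :=
  Real.sqrt (∑ i, ‖v i‖ ^ 2)

local notation "I∞" => comap Complex.im atTop

theorem DifferentiableOn.exists_hasSum_pow_ball {F : ℂ → ℂ} {r : ℝ} (hr : 0 < r)
    (hF : DifferentiableOn ℂ F (ball 0 r)) :
    ∃ c : ℕ → ℂ, ∀ q : ℂ, ‖q‖ < r →
      HasSum (fun n => c n * q ^ n) (F q) ∧ Summable (fun n => ‖c n * q ^ n‖) := by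
  have hF' : ∀ R : NNReal, 0 < R → (R : ℝ) < r →
      HasFPowerSeriesOnBall F (cauchyPowerSeries F 0 R) 0 R := fun R hR hRr =>
    (hF.mono (closedBall_subset_ball hRr)).hasFPowerSeriesOnBall hR
  obtain ⟨R₀, hR₀, hR₀r⟩ := exists_between hr
  lift R₀ to NNReal using hR₀.le
  refine ⟨(cauchyPowerSeries F 0 R₀).coeff, fun q hq => ?_⟩
  obtain ⟨R, hqR, hRr⟩ := exists_between hq
  lift R to NNReal using (norm_nonneg q).trans hqR.le
  -- by uniqueness of power series, the Cauchy series for radius `R₀` also converges to `F` on the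
  -- ball of radius `R`
  have hp := (hF' R₀ hR₀ hR₀r).exchange_radius (hF' R ((norm_nonneg q).trans_lt hqR) hRr)
  have hq' : q ∈ eball (0 : ℂ) R := by
    rw [eball_coe]
    simpa using hqR
  simp_rw [mul_comm _ (q ^ _), ← smul_eq_mul, ← FormalMultilinearSeries.apply_eq_pow_smul_coeff]
  exact ⟨by simpa using hp.hasSum hq',
    (cauchyPowerSeries F 0 R₀).summable_norm_apply (eball_subset_eball hp.r_le hq')⟩

theorem periodic_qParam (h : ℝ) : Periodic (qParam h) h := by
  intro z
  rcases eq_or_ne h 0 with rfl | hh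
  · simp [qParam]
  · have hh' : (h : ℂ) ≠ 0 := ofReal_ne_zero.mpr hh
    calc exp (2 * π * I * (z + h) / h) = exp (2 * π * I * z / h + 2 * π * I) := by
          congr 1
          field_simp
      _ = exp (2 * π * I * z / h) := exp_periodic _

theorem eventually_lt_im (Y : ℝ) : ∀ᶠ τ : ℂ in I∞, Y < τ.im :=
  preimage_mem_comap (Ioi_mem_atTop Y)

/-- `invQParam h ∘ qParam h` moves `z` by a multiple of `h`, so this is `h`-periodic and agrees
with `g` wherever `g` is `h`-periodic. -/
noncomputable def periodicExtension (h : ℝ) (g : ℂ → ℂ) : ℂ → ℂ :=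
  fun z => g (invQParam h (qParam h z))

section HalfPlane

variable {g : ℂ → ℂ} {h Y : ℝ}

theorem add_int_mul_eq_of_add_eq (hg : ∀ τ : ℂ, Y < τ.im → g (τ + h) = g τ) (k : ℤ) {τ : ℂ}
    (hτ : Y < τ.im) : g (τ + k * h) = g τ := by
  induction k using Int.induction_on with
  | zero => simp
  | succ k ih =>
    push_cast at ih ⊢
    rw [add_one_mul, ← add_assoc, hg _ (by simpa using hτ), ih]
  | pred k ih =>
    push_cast at ih ⊢
    rw [← ih, ← hg _ (by simpa using hτ)]
    ring_nf

theorem periodic_periodicExtension : Periodic (periodicExtension h g) h := fun z =>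
  congrArg (fun q => g (invQParam h q)) (periodic_qParam h z)

theorem periodicExtension_eq_of_lt_im (hh : h ≠ 0) (hg : ∀ τ : ℂ, Y < τ.im → g (τ + h) = g τ)
    {τ : ℂ} (hτ : Y < τ.im) : periodicExtension h g τ = g τ := by
  obtain ⟨k, hk⟩ := qParam_left_inv_mod_period hh τ
  rw [periodicExtension, hk, add_int_mul_eq_of_add_eq hg k hτ]

theorem differentiableAt_periodicExtension (hh : h ≠ 0)
    (hg : ∀ τ : ℂ, Y < τ.im → g (τ + h) = g τ) (hhol : DifferentiableOn ℂ g {τ | Y < τ.im})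
    {τ : ℂ} (hτ : Y < τ.im) : DifferentiableAt ℂ (periodicExtension h g) τ := by
  have hopen : IsOpen {τ : ℂ | Y < τ.im} := isOpen_lt continuous_const continuous_im
  refine (hhol.differentiableAt (hopen.mem_nhds hτ)).congr_of_eventuallyEq ?_
  filter_upwards [hopen.mem_nhds hτ] with z hz using periodicExtension_eq_of_lt_im hh hg hz

theorem lt_im_invQParam_of_norm_lt (hh : 0 < h) {q : ℂ} (hq₀ : q ≠ 0)
    (hq : ‖q‖ < Real.exp (-2 * π * Y / h)) : Y < (invQParam h q).im := by
  rwa [← norm_qParam_lt_iff hh, qParam_right_inv hh.ne' hq₀]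

theorem differentiableOn_cuspFunction_periodicExtension (hh : 0 < h)
    (hg : ∀ τ : ℂ, Y < τ.im → g (τ + h) = g τ) (hhol : DifferentiableOn ℂ g {τ | Y < τ.im})
    (hbd : BoundedAtFilter I∞ g) :
    DifferentiableOn ℂ (cuspFunction h (periodicExtension h g))
      (ball 0 (Real.exp (-2 * π * Y / h))) := by
  intro q hq
  refine DifferentiableAt.differentiableWithinAt ?_
  rcases eq_or_ne q 0 with rfl | hq₀
  · refine periodic_periodicExtension.differentiableAt_cuspFunction_zero hh ?_ ?_
    · filter_upwards [eventually_lt_im Y] with τ hτ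
      exact differentiableAt_periodicExtension hh.ne' hg hhol hτ
    · refine hbd.congr' ?_ EventuallyEq.rfl
      filter_upwards [eventually_lt_im Y] with τ hτ
      exact (periodicExtension_eq_of_lt_im hh.ne' hg hτ).symm
  · rw [← qParam_right_inv hh.ne' hq₀]
    exact periodic_periodicExtension.differentiableAt_cuspFunction hh.ne'
      (differentiableAt_periodicExtension hh.ne' hg hhol
        (lt_im_invQParam_of_norm_lt hh hq₀ (by simpa using hq)))

theorem exists_hasSum_qParam_pow (hh : 0 < h) (hg : ∀ τ : ℂ, Y < τ.im → g (τ + h) = g τ)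
    (hhol : DifferentiableOn ℂ g {τ | Y < τ.im}) (hbd : BoundedAtFilter I∞ g) :
    ∃ c : ℕ → ℂ, ∀ τ : ℂ, Y < τ.im →
      HasSum (fun n => c n * qParam h τ ^ n) (g τ) ∧
        Summable (fun n => ‖c n * qParam h τ ^ n‖) := by
  obtain ⟨c, hc⟩ := (differentiableOn_cuspFunction_periodicExtension hh hg hhol hbd)
    |>.exists_hasSum_pow_ball (Real.exp_pos _)
  refine ⟨c, fun τ hτ => ?_⟩
  have := hc (qParam h τ) ((norm_qParam_lt_iff hh Y τ).mpr hτ)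
  rwa [eq_cuspFunction hh.ne' periodic_periodicExtension,
    periodicExtension_eq_of_lt_im hh.ne' hg hτ] at this

theorem exp_two_pi_I_sub_mul_div_eq_qParam (n M : ℕ) (τ : ℂ) :
    exp (2 * π * I * ((n : ℂ) - M) * τ / h) = qParam h τ ^ n * (qParam h τ ^ M)⁻¹ := by
  rw [qParam, ← exp_nat_mul, ← exp_nat_mul, ← exp_neg, ← exp_add]
  congr 1
  ring

theorem isBigO_qParam_pow (h : ℝ) (M : ℕ) :
    (fun τ => qParam h τ ^ M) =O[I∞] fun τ => Real.exp (-(2 * π * M / h) * τ.im) := by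
  refine isBigO_of_le _ fun τ => le_of_eq ?_
  rw [norm_pow, norm_qParam, ← Real.exp_nat_mul, Real.norm_of_nonneg (Real.exp_nonneg _)]
  ring_nf

theorem exists_hasSum_exp_of_isBigO (hh : 0 < h) (hg : ∀ τ : ℂ, Y < τ.im → g (τ + h) = g τ)
    (hhol : DifferentiableOn ℂ g {τ | Y < τ.im}) {ν : ℝ}
    (hgrow : g =O[I∞] fun τ => Real.exp (ν * τ.im)) {M : ℕ} (hM : ν * h ≤ 2 * π * M) :
    ∃ c : ℕ → ℂ, ∀ τ : ℂ, Y < τ.im →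
      HasSum (fun n => c n * exp (2 * π * I * ((n : ℂ) - M) * τ / h)) (g τ) ∧
        Summable (fun n => ‖c n * exp (2 * π * I * ((n : ℂ) - M) * τ / h)‖) := by
  have hdecay : (fun τ : ℂ => Real.exp (ν * τ.im) * Real.exp (-(2 * π * M / h) * τ.im))
      =O[I∞] (1 : ℂ → ℝ) := by
    refine IsBigO.of_bound 1 ?_
    filter_upwards [eventually_lt_im 0] with τ hτ
    have : ν - 2 * π * M / h ≤ 0 := by rwa [sub_nonpos, le_div_iff₀ hh]
    rw [← Real.exp_add, ← add_mul, ← sub_eq_add_neg, Real.norm_of_nonneg (Real.exp_nonneg _)]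
    simpa using mul_nonpos_of_nonpos_of_nonneg this hτ.le
  have hbd : BoundedAtFilter I∞ (fun τ => g τ * qParam h τ ^ M) :=
    (hgrow.mul (isBigO_qParam_pow h M)).trans hdecay
  have hper (τ : ℂ) (hτ : Y < τ.im) : g (τ + h) * qParam h (τ + h) ^ M = g τ * qParam h τ ^ M := by
    rw [hg τ hτ, periodic_qParam h τ]
  obtain ⟨c, hc⟩ := exists_hasSum_qParam_pow hh hper
    (hhol.mul (differentiable_qParam.pow M).differentiableOn) hbd
  refine ⟨c, fun τ hτ => ?_⟩
  obtain ⟨hsum, hnorm⟩ := hc τ hτ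
  simp_rw [exp_two_pi_I_sub_mul_div_eq_qParam, ← mul_assoc]
  refine ⟨?_, ?_⟩
  · simpa [mul_inv_cancel_right₀ (pow_ne_zero _ (qParam_ne_zero τ))] using
      hsum.mul_right (qParam h τ ^ M)⁻¹
  · simpa only [norm_mul] using hnorm.mul_right ‖(qParam h τ ^ M)⁻¹‖

end HalfPlane

theorem norm_apply_le_vnorm {m : ℕ} (v : Fin m → ℂ) (j : Fin m) : ‖v j‖ ≤ vnorm v :=
  Real.le_sqrt_of_sq_le (Finset.single_le_sum (f := fun i => ‖v i‖ ^ 2)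
    (fun _ _ => sq_nonneg _) (Finset.mem_univ j))

theorem Matrix.norm_mulVec_apply_le {ι κ R : Type*} [Fintype κ] [SeminormedRing R]
    (A : Matrix ι κ R) (v : κ → R) (i : ι) : ‖(A *ᵥ v) i‖ ≤ ∑ j, ‖A i j‖ * ‖v j‖ :=
  (norm_sum_le _ _).trans (Finset.sum_le_sum fun _ _ => norm_mul_le _ _)

theorem Matrix.summable_norm_mulVec_apply {ι κ R : Type*} [Fintype κ] [SeminormedRing R]
    (A : Matrix ι κ R) {f : ℕ → κ → R} (hf : ∀ j, Summable fun n => ‖f n j‖) (i : ι) :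
    Summable fun n => ‖(A *ᵥ f n) i‖ :=
  .of_nonneg_of_le (fun _ => norm_nonneg _) (fun n => A.norm_mulVec_apply_le (f n) i)
    (summable_sum fun j _ => (hf j).mul_left _)

theorem HasSum.matrix_mulVec {ι κ R : Type*} [Fintype κ] [NonUnitalNonAssocSemiring R]
    [TopologicalSpace R] [IsTopologicalSemiring R] {f : ℕ → κ → R} {v : κ → R}
    (hf : HasSum f v) (A : Matrix ι κ R) : HasSum (fun n => A *ᵥ f n) (A *ᵥ v) :=
  Pi.hasSum.mpr fun i => hasSum_sum fun j _ => (Pi.hasSum.mp hf j).mul_left (A i j)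

section PeriodicPart

variable {m : ℕ} (h : ℝ) (μ : Fin m → ℝ) (P : GL (Fin m) ℂ) (X : ℂ → Fin m → ℂ)

noncomputable def periodicPart (i : Fin m) (τ : ℂ) : ℂ :=
  exp (-(2 * π * I * μ i * τ / h)) * ((P⁻¹ : GL (Fin m) ℂ) *ᵥ X τ) i

theorem eq_conj_diagonal_mulVec_periodicPart (τ : ℂ) :
    X τ = ((P : Matrix (Fin m) (Fin m) ℂ)
      * diagonal (fun i => exp (2 * π * I * μ i * τ / h))
      * ((P⁻¹ : GL (Fin m) ℂ) : Matrix (Fin m) (Fin m) ℂ))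
        *ᵥ ((P : Matrix (Fin m) (Fin m) ℂ) *ᵥ fun i => periodicPart h μ P X i τ) := by
  have hdiag : diagonal (fun i => exp (2 * π * I * μ i * τ / h))
      *ᵥ (fun i => periodicPart h μ P X i τ) = (P⁻¹ : GL (Fin m) ℂ) *ᵥ X τ := by
    ext i
    rw [mulVec_diagonal, periodicPart, ← mul_assoc, ← exp_add, add_neg_cancel, exp_zero, one_mul]
  rw [mulVec_mulVec, mul_assoc, ← Units.val_mul, inv_mul_cancel, Units.val_one, mul_one,
    ← mulVec_mulVec, hdiag, mulVec_mulVec, ← Units.val_mul, mul_inv_cancel, Units.val_one,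
    one_mulVec]

variable {h μ P X}

theorem periodicPart_add {Y : ℝ} (hh : h ≠ 0)
    (hper : ∀ τ : ℂ, Y < τ.im →
      X (τ + h) = ((P : Matrix (Fin m) (Fin m) ℂ)
        * diagonal (fun i => exp (2 * π * I * μ i))
        * ((P⁻¹ : GL (Fin m) ℂ) : Matrix (Fin m) (Fin m) ℂ)) *ᵥ X τ)
    (i : Fin m) {τ : ℂ} (hτ : Y < τ.im) :
    periodicPart h μ P X i (τ + h) = periodicPart h μ P X i τ := by
  have hh' : (h : ℂ) ≠ 0 := ofReal_ne_zero.mpr hh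
  have hconj : ((P⁻¹ : GL (Fin m) ℂ) : Matrix (Fin m) (Fin m) ℂ) * ((P : Matrix (Fin m) (Fin m) ℂ)
      * diagonal (fun i => exp (2 * π * I * μ i))
      * ((P⁻¹ : GL (Fin m) ℂ) : Matrix (Fin m) (Fin m) ℂ))
      = diagonal (fun i => exp (2 * π * I * μ i))
        * ((P⁻¹ : GL (Fin m) ℂ) : Matrix (Fin m) (Fin m) ℂ) := by
    rw [← mul_assoc, ← mul_assoc, ← Units.val_mul, inv_mul_cancel, Units.val_one, one_mul]
  rw [periodicPart, periodicPart, hper τ hτ, mulVec_mulVec, hconj, ← mulVec_mulVec,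
    mulVec_diagonal, ← mul_assoc, ← exp_add]
  congr 2
  field_simp
  ring

theorem differentiableOn_periodicPart {s : Set ℂ}
    (hhol : ∀ j, DifferentiableOn ℂ (fun τ => X τ j) s) (i : Fin m) :
    DifferentiableOn ℂ (periodicPart h μ P X i) s := by
  refine DifferentiableOn.mul (by fun_prop) ?_
  simp only [mulVec, dotProduct]
  exact DifferentiableOn.fun_sum fun j _ => (hhol j).const_mul _

theorem isBigO_periodicPart {l : Filter ℂ} {ν : ℝ}
    (hX : (fun τ => vnorm (X τ)) =O[l] fun τ => Real.exp (ν * τ.im)) (i : Fin m) :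
    periodicPart h μ P X i =O[l] fun τ => Real.exp ((2 * π * μ i / h + ν) * τ.im) := by
  simp_rw [add_mul, Real.exp_add]
  refine IsBigO.mul (isBigO_of_le _ fun τ => le_of_eq ?_) ?_
  · have : -(2 * π * I * μ i * τ / h) = ((-(2 * π * μ i / h) : ℝ) : ℂ) * (I * τ) := by
      push_cast
      ring
    rw [norm_exp, Real.norm_of_nonneg (Real.exp_nonneg _), this, re_ofReal_mul, I_mul_re]
    ring_nf
  · simp only [mulVec, dotProduct]
    refine IsBigO.fun_sum fun j _ => ((isBigO_of_le _ fun τ => ?_).trans hX).const_mul_left _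
    exact (norm_apply_le_vnorm _ j).trans (Real.le_norm_self _)

end PeriodicPart

theorem stmt10_general {m : ℕ} (h Y : ℝ) (hh : 0 < h)
    (P : GL (Fin m) ℂ) (μ : Fin m → ℝ)
    (X : ℂ → Fin m → ℂ)
    (hhol : ∀ i, DifferentiableOn ℂ (fun τ => X τ i) {τ : ℂ | Y < τ.im})
    (hper : ∀ τ : ℂ, Y < τ.im →
      X (τ + h)
        = ((P : Matrix (Fin m) (Fin m) ℂ)
            * Matrix.diagonal (fun i => Complex.exp (2 * Real.pi * Complex.I * μ i))
            * ((P⁻¹ : GL (Fin m) ℂ) : Matrix (Fin m) (Fin m) ℂ)).mulVec (X τ))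
    (hgrow : ∃ ν : ℝ, ∃ Y' : ℝ, Y < Y' ∧
      ∀ τ : ℂ, Y' < τ.im → vnorm (X τ) < Real.exp (ν * τ.im)) :
    ∃ M : ℤ, ∃ a : ℕ → Fin m → ℂ, ∀ τ : ℂ, Y < τ.im →
      (∀ i : Fin m, Summable (fun n : ℕ =>
        ‖a n i * Complex.exp (2 * Real.pi * Complex.I * ((n : ℂ) - M) * τ / h)‖)) ∧
      X τ = ((P : Matrix (Fin m) (Fin m) ℂ)
          * Matrix.diagonal (fun i => Complex.exp (2 * Real.pi * Complex.I * μ i * τ / h))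
          * ((P⁻¹ : GL (Fin m) ℂ) : Matrix (Fin m) (Fin m) ℂ)).mulVec
        (fun i => ∑' n : ℕ,
          a n i * Complex.exp (2 * Real.pi * Complex.I * ((n : ℂ) - M) * τ / h)) := by
  obtain ⟨ν, Y', -, hXbd⟩ := hgrow
  have hX : (fun τ => vnorm (X τ)) =O[I∞] fun τ => Real.exp (ν * τ.im) := by
    refine IsBigO.of_bound 1 ((eventually_lt_im Y').mono fun τ hτ => ?_)
    rw [one_mul]
    exact (Real.norm_of_nonneg (Real.sqrt_nonneg _)).trans_le
      ((hXbd τ hτ).le.trans (Real.le_norm_self _))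
  obtain ⟨B, hB⟩ := Finite.bddAbove_range fun i => (2 * π * μ i / h + ν) * h / (2 * π)
  obtain ⟨M, hBM⟩ := exists_nat_ge B
  have hM (i : Fin m) : (2 * π * μ i / h + ν) * h ≤ 2 * π * M := by
    rw [mul_comm _ (M : ℝ), ← div_le_iff₀ Real.two_pi_pos]
    exact (hB ⟨i, rfl⟩).trans hBM
  choose c hc using fun i => exists_hasSum_exp_of_isBigO hh
    (fun τ hτ => periodicPart_add hh.ne' hper i hτ) (differentiableOn_periodicPart hhol i)
    (isBigO_periodicPart hX i) (hM i)
  refine ⟨M, fun n => (P : Matrix (Fin m) (Fin m) ℂ) *ᵥ fun j => c j n, fun τ hτ => ?_⟩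
  have hterm (n : ℕ) (i : Fin m) (z : ℂ) :
      ((P : Matrix (Fin m) (Fin m) ℂ) *ᵥ fun j => c j n) i * z
        = ((P : Matrix (Fin m) (Fin m) ℂ) *ᵥ fun j => c j n * z) i := by
    simp only [mulVec, dotProduct, Finset.sum_mul, mul_assoc]
  have hsum := (Pi.hasSum.mpr fun j => (hc j τ hτ).1).matrix_mulVec (P : Matrix (Fin m) (Fin m) ℂ)
  simp only [Int.cast_natCast, hterm]
  refine ⟨(P : Matrix (Fin m) (Fin m) ℂ).summable_norm_mulVec_apply fun j => (hc j τ hτ).2, ?_⟩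
  rw [funext fun i => (Pi.hasSum.mp hsum i).tsum_eq]
  exact eq_conj_diagonal_mulVec_periodicPart h μ P X τ

theorem stmt10 {m : ℕ} (hm : 1 ≤ m) (h Y : ℝ) (hh : 0 < h) (hY : 0 < Y)
    (P : GL (Fin m) ℂ) (μ : Fin m → ℝ) (hμ : ∀ i, μ i ∈ Set.Ico (0 : ℝ) 1)
    (X : ℂ → Fin m → ℂ)
    (hhol : ∀ i, DifferentiableOn ℂ (fun τ => X τ i) {τ : ℂ | Y < τ.im})
    (hper : ∀ τ : ℂ, Y < τ.im →
      X (τ + h)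
        = ((P : Matrix (Fin m) (Fin m) ℂ)
            * Matrix.diagonal (fun i => Complex.exp (2 * Real.pi * Complex.I * μ i))
            * ((P⁻¹ : GL (Fin m) ℂ) : Matrix (Fin m) (Fin m) ℂ)).mulVec (X τ))
    (hgrow : ∃ ν : ℝ, ∃ Y' : ℝ, Y < Y' ∧
      ∀ τ : ℂ, Y' < τ.im → vnorm (X τ) < Real.exp (ν * τ.im)) :
    ∃ M : ℤ, ∃ a : ℕ → Fin m → ℂ, ∀ τ : ℂ, Y < τ.im →
      (∀ i : Fin m, Summable (fun n : ℕ =>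
        ‖a n i * Complex.exp (2 * Real.pi * Complex.I * ((n : ℂ) - M) * τ / h)‖)) ∧
      X τ = ((P : Matrix (Fin m) (Fin m) ℂ)
          * Matrix.diagonal (fun i => Complex.exp (2 * Real.pi * Complex.I * μ i * τ / h))
          * ((P⁻¹ : GL (Fin m) ℂ) : Matrix (Fin m) (Fin m) ℂ)).mulVec
        (fun i => ∑' n : ℕ,
          a n i * Complex.exp (2 * Real.pi * Complex.I * ((n : ℂ) - M) * τ / h)) :=
  stmt10_general h Y hh P μ X hhol hper hgrow
end

section
/- Let γ₀ = (a₀ b₀; c₀ d₀) be a 2×2 real matrix with c₀ ≠ 0, and let γ be a 2×2 real matrix with rows r₁ and r₂. Let γ̃ = γ₀·γ have rows r̃₁ and r̃₂. Then either ‖r₁‖ ≤ max{1, 2|d₀/c₀|}·‖r₂‖ or ‖r̃₁‖ ≤ (2(|a₀|+|b₀|)/|c₀|)·‖r̃₂‖, where ‖·‖ denotes the Euclidean norm on ℝ². -/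
/-- Euclidean norm of a vector in `ℝ²`. -/
noncomputable def rnorm2 (v : Fin 2 → ℝ) : ℝ :=
  Real.sqrt (v 0 ^ 2 + v 1 ^ 2)

/-!
If the first row dominates the second, `‖r₁‖ > max 1 (2|d₀/c₀|) ‖r₂‖`, then
`‖r̃₂‖ = ‖c₀ r₁ + d₀ r₂‖ ≥ |c₀| ‖r₁‖ - |d₀| ‖r₂‖ ≥ |c₀| ‖r₁‖ / 2`, while
`‖r̃₁‖ = ‖a₀ r₁ + b₀ r₂‖ ≤ (|a₀| + |b₀|) ‖r₁‖`; dividing gives the second alternative.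
-/

section LinearCombination

variable {E : Type*} [SeminormedAddCommGroup E] [NormedSpace ℝ E]

theorem norm_smul_add_smul_le_of_norm_le (a b : ℝ) {x y : E} (hyx : ‖y‖ ≤ ‖x‖) :
    ‖a • x + b • y‖ ≤ (|a| + |b|) * ‖x‖ :=
  calc ‖a • x + b • y‖ ≤ |a| * ‖x‖ + |b| * ‖y‖ := by
        simpa only [norm_smul, Real.norm_eq_abs] using norm_add_le (a • x) (b • y)
    _ ≤ (|a| + |b|) * ‖x‖ := by nlinarith [abs_nonneg b]

theorem half_mul_norm_le_norm_smul_add_smul {c d : ℝ} {x y : E}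
    (h : 2 * |d| * ‖y‖ ≤ |c| * ‖x‖) : |c| * ‖x‖ / 2 ≤ ‖c • x + d • y‖ := by
  have := norm_sub_norm_le (c • x) (-(d • y))
  simp only [norm_smul, norm_neg, sub_neg_eq_add, Real.norm_eq_abs] at this
  linarith

theorem norm_smul_add_smul_le_of_dominates (a b : ℝ) {c d : ℝ} {x y : E} (hc : c ≠ 0)
    (h : max 1 (2 * |d / c|) * ‖y‖ < ‖x‖) :
    ‖a • x + b • y‖ ≤ 2 * (|a| + |b|) / |c| * ‖c • x + d • y‖ := by
  have hc' : 0 < |c| := abs_pos.mpr hc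
  have hy := norm_nonneg y
  have hyx : ‖y‖ ≤ ‖x‖ := by nlinarith [le_max_left 1 (2 * |d / c|)]
  have hdy : 2 * |d| * ‖y‖ ≤ |c| * ‖x‖ := by
    have : 2 * |d / c| * ‖y‖ ≤ ‖x‖ := by nlinarith [le_max_right 1 (2 * |d / c|)]
    rw [abs_div] at this
    field_simp at this
    linarith
  calc ‖a • x + b • y‖ ≤ (|a| + |b|) * ‖x‖ := norm_smul_add_smul_le_of_norm_le a b hyx
    _ = 2 * (|a| + |b|) / |c| * (|c| * ‖x‖ / 2) := by field_simp
    _ ≤ 2 * (|a| + |b|) / |c| * ‖c • x + d • y‖ := by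
        gcongr
        exact half_mul_norm_le_norm_smul_add_smul hdy

end LinearCombination

theorem rnorm2_eq_norm (v : Fin 2 → ℝ) : rnorm2 v = ‖WithLp.toLp 2 v‖ := by
  rw [EuclideanSpace.norm_eq, Fin.sum_univ_two, rnorm2]
  simp only [Real.norm_eq_abs, sq_abs]

theorem Matrix.toLp_mul_row_fin_two (A B : Matrix (Fin 2) (Fin 2) ℝ) (i : Fin 2) :
    WithLp.toLp 2 ((A * B) i) = A i 0 • WithLp.toLp 2 (B 0) + A i 1 • WithLp.toLp 2 (B 1) := by
  ext j
  simp [Matrix.mul_apply, Fin.sum_univ_two]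

theorem stmt13 (γ₀ γ : Matrix (Fin 2) (Fin 2) ℝ) (hc : γ₀ 1 0 ≠ 0) :
    rnorm2 (γ 0) ≤ max 1 (2 * |γ₀ 1 1 / γ₀ 1 0|) * rnorm2 (γ 1) ∨
    rnorm2 ((γ₀ * γ) 0) ≤ 2 * (|γ₀ 0 0| + |γ₀ 0 1|) / |γ₀ 1 0| * rnorm2 ((γ₀ * γ) 1) := by
  simp only [rnorm2_eq_norm, Matrix.toLp_mul_row_fin_two]
  exact or_iff_not_imp_left.mpr fun h =>
    norm_smul_add_smul_le_of_dominates _ _ hc (not_le.mp h)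
end

section
/- Let h > 0, μ ∈ [0,1), B ≥ 0, C > 0, and let a : ℕ → ℂ. Suppose that for every τ ∈ ℍ the series Σ_{n=0}^{∞} a_n·exp(2πi(n+μ)τ/h) converges absolutely, and let f(τ) denote its sum. Suppose |f(x+iy)| ≤ C·y^{−B} for every x ∈ ℝ and every y with 0 < y ≤ 1. Then there is a constant C′ > 0 such that for every real X ≥ 1, Σ_{0 ≤ n ≤ X} |a_n|² ≤ C′·X^{2B}. -/
/-! Write `τ = x + y i`. The `n`-th term of `f(τ)` is `cₙ e^{2πi(n+μ)x/h}` with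
`|cₙ| = |aₙ| e^{-2π(n+μ)y/h}`, and these exponentials are orthogonal on `(0, h]`, so
`∫₀ʰ |f(x + y i)|² dx = h Σ |cₙ|²`. The bound on `f` makes this at most `h C² y^{-2B}`.
Taking `y = 1/X`, every `n ≤ X` has `e^{-4π(n+μ)y/h} ≥ e^{-8π/h}` because `μ < 1`, whence
`Σ_{n ≤ X} |aₙ|² ≤ e^{8π/h} C² X^{2B}`. -/

open Complex MeasureTheory Set
open scoped Real ComplexConjugate

theorem Summable.sq_of_nonneg {ι : Type*} {t : ι → ℝ} (ht : Summable t) (h0 : 0 ≤ t) :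
    Summable (t · ^ 2) :=
  ((ht.mul_of_nonneg ht h0 h0).comp_injective Function.diag_injective).congr fun i =>
    (sq (t i)).symm

theorem ofReal_sq_norm_tsum {ι : Type*} {f : ι → ℂ} (hf : Summable (‖f ·‖)) :
    ((‖∑' i, f i‖ ^ 2 : ℝ) : ℂ) = ∑' p : ι × ι, f p.1 * conj (f p.2) := by
  rw [ofReal_pow, ← mul_conj', conj_tsum, tsum_mul_tsum_of_summable_norm hf (by simpa using hf)]

theorem integral_exp_two_pi_I_int_mul_Ioc {T : ℝ} (hT : 0 < T) (k : ℤ) :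
    ∫ x in Ioc 0 T, exp (2 * π * I * k * x / T) = if k = 0 then (T : ℂ) else 0 := by
  rw [← intervalIntegral.integral_of_le hT.le]
  split_ifs with hk
  · simp [hk]
  · have hc : 2 * π * I * k / T ≠ 0 := by simp [hk, hT.ne', Real.pi_ne_zero]
    have hcT : 2 * π * I * k / T * T = k * (2 * π * I) := by
      rw [div_mul_cancel₀ _ (ofReal_ne_zero.mpr hT.ne')]; ring
    have hexp (x : ℝ) : exp (2 * π * I * k * x / T) = exp (2 * π * I * k / T * x) := by
      rw [div_mul_eq_mul_div]
    simp_rw [hexp]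
    rw [integral_exp_mul_complex hc, hcT, exp_int_mul_two_pi_mul_I]
    simp

theorem norm_exp_two_pi_I_mul (T ν x : ℝ) (n : ℕ) :
    ‖exp (2 * π * I * (n + ν) * x / T)‖ = 1 := by
  simp [norm_exp]

theorem integral_Ioc_exp_two_pi_I_mul_conj {T : ℝ} (hT : 0 < T) (ν : ℝ) (n m : ℕ) :
    ∫ x in Ioc 0 T, exp (2 * π * I * (n + ν) * x / T) * conj (exp (2 * π * I * (m + ν) * x / T)) =
      if n = m then (T : ℂ) else 0 := by
  have hexp (x : ℝ) : exp (2 * π * I * (n + ν) * x / T) * conj (exp (2 * π * I * (m + ν) * x / T)) =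
      exp (2 * π * I * ((n - m : ℤ) : ℂ) * x / T) := by
    rw [← exp_conj, ← exp_add]
    congr 1
    simp only [map_div₀, map_mul, map_add, map_ofNat, conj_ofReal, conj_I, map_natCast]
    push_cast
    ring
  simp only [hexp, integral_exp_two_pi_I_int_mul_Ioc hT, sub_eq_zero, Int.natCast_inj]

theorem integral_Ioc_sq_norm_tsum_mul_exp {T : ℝ} (hT : 0 < T) (ν : ℝ) {c : ℕ → ℂ}
    (hc : Summable (‖c ·‖)) :
    ∫ x in Ioc 0 T, ‖∑' n : ℕ, c n * exp (2 * π * I * (n + ν) * x / T)‖ ^ 2 =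
      T * ∑' n, ‖c n‖ ^ 2 := by
  set e : ℕ → ℝ → ℂ := fun n x => exp (2 * π * I * (n + ν) * x / T)
  set F : ℕ × ℕ → ℝ → ℂ := fun p x => c p.1 * e p.1 x * conj (c p.2 * e p.2 x)
  have hF_norm (p : ℕ × ℕ) (x : ℝ) : ‖F p x‖ = ‖c p.1‖ * ‖c p.2‖ := by
    simp [F, e, norm_exp_two_pi_I_mul]
  have hF_integral (p : ℕ × ℕ) :
      ∫ x in Ioc 0 T, F p x = if p.1 = p.2 then (T * ‖c p.1‖ ^ 2 : ℝ) else 0 := by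
    have hF (x : ℝ) : F p x = c p.1 * conj (c p.2) * (e p.1 x * conj (e p.2 x)) := by
      simp only [F, map_mul]; ring
    simp only [hF, e, integral_const_mul, integral_Ioc_exp_two_pi_I_mul_conj hT]
    split_ifs with hp
    · rw [hp, mul_conj']; push_cast; ring
    · simp
  have hF_summable : Summable fun p => ∫ x in Ioc 0 T, ‖F p x‖ := by
    simp only [hF_norm, setIntegral_const, Real.volume_real_Ioc_of_le hT.le, sub_zero, smul_eq_mul]
    exact (hc.mul_of_nonneg hc (fun _ => norm_nonneg _) (fun _ => norm_nonneg _)).mul_left T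
  have hF_cont (p : ℕ × ℕ) : Continuous (F p) := by fun_prop
  apply ofReal_injective
  calc ((∫ x in Ioc 0 T, ‖∑' n, c n * e n x‖ ^ 2 : ℝ) : ℂ)
      = ∫ x in Ioc 0 T, ∑' p, F p x := by
        rw [← integral_complex_ofReal]
        refine integral_congr_ae (ae_of_all _ fun x => ofReal_sq_norm_tsum ?_)
        simpa [e, norm_exp_two_pi_I_mul] using hc
    _ = ∑' p, ∫ x in Ioc 0 T, F p x :=
        (integral_tsum_of_summable_integral_norm (fun p => (hF_cont p).integrableOn_Ioc)
          hF_summable).symm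
    _ = ∑' n, ((T * ‖c n‖ ^ 2 : ℝ) : ℂ) := by
        rw [tsum_congr hF_integral, ← Function.diag_injective.tsum_eq]
        · simp [Function.diag]
        · rintro ⟨n, m⟩ hnm
          by_cases h : n = m
          · exact ⟨n, by rw [h]; rfl⟩
          · simp [h] at hnm
    _ = ((T * ∑' n, ‖c n‖ ^ 2 : ℝ) : ℂ) := by rw [← ofReal_tsum, tsum_mul_left]

theorem exp_two_pi_I_mul_add_mul_I (T ν x y : ℝ) (n : ℕ) :
    exp (2 * π * I * (n + ν) * (x + y * I) / T) =
      Real.exp (-(2 * π * (n + ν) * y / T)) * exp (2 * π * I * (n + ν) * x / T) := by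
  rw [ofReal_exp, ← exp_add]
  congr 1
  push_cast
  ring_nf
  rw [I_sq]
  ring

theorem norm_exp_two_pi_I_mul_add_mul_I (T ν x y : ℝ) (n : ℕ) :
    ‖exp (2 * π * I * (n + ν) * (x + y * I) / T)‖ = Real.exp (-(2 * π * (n + ν) * y / T)) := by
  rw [exp_two_pi_I_mul_add_mul_I, norm_mul, norm_exp_two_pi_I_mul, mul_one, norm_real,
    Real.norm_of_nonneg (Real.exp_pos _).le]

theorem tsum_sq_norm_mul_exp_le {h : ℝ} (hh : 0 < h) {μ y M : ℝ} {a : ℕ → ℂ}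
    (hsum : Summable fun n : ℕ => ‖a n‖ * Real.exp (-(2 * π * (n + μ) * y / h)))
    (hbd : ∀ x : ℝ, ‖∑' n : ℕ, a n * exp (2 * π * I * (n + μ) * (x + y * I) / h)‖ ≤ M) :
    ∑' n : ℕ, (‖a n‖ * Real.exp (-(2 * π * (n + μ) * y / h))) ^ 2 ≤ M ^ 2 := by
  set c : ℕ → ℂ := fun n => a n * Real.exp (-(2 * π * (n + μ) * y / h))
  have hc_norm (n : ℕ) : ‖c n‖ = ‖a n‖ * Real.exp (-(2 * π * (n + μ) * y / h)) := by
    rw [norm_mul, norm_real, Real.norm_of_nonneg (Real.exp_pos _).le]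
  have hseries (x : ℝ) : ∑' n : ℕ, a n * exp (2 * π * I * (n + μ) * (x + y * I) / h) =
      ∑' n : ℕ, c n * exp (2 * π * I * (n + μ) * x / h) :=
    tsum_congr fun n => by rw [exp_two_pi_I_mul_add_mul_I, ← mul_assoc]
  simp only [← hc_norm] at hsum ⊢
  refine le_of_mul_le_mul_left ?_ hh
  calc h * ∑' n, ‖c n‖ ^ 2
      = ∫ x in Ioc 0 h, ‖∑' n : ℕ, c n * exp (2 * π * I * (n + μ) * x / h)‖ ^ 2 :=
        (integral_Ioc_sq_norm_tsum_mul_exp hh μ hsum).symm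
    _ ≤ ∫ x in Ioc 0 h, M ^ 2 := by
        refine integral_mono_of_nonneg (ae_of_all _ fun _ => by positivity)
          (integrable_const _) (ae_of_all _ fun x => ?_)
        dsimp only
        rw [← hseries]
        exact pow_le_pow_left₀ (norm_nonneg _) (hbd x) 2
    _ = h * M ^ 2 := by simp [Real.volume_real_Ioc_of_le hh.le]

theorem sq_le_exp_mul_sq_mul_exp_neg (r : ℝ) {t K : ℝ} (ht : 2 * t ≤ K) :
    r ^ 2 ≤ Real.exp K * (r * Real.exp (-t)) ^ 2 := by
  have h1 : 1 ≤ Real.exp K * Real.exp (-t) ^ 2 := by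
    rw [← Real.exp_nat_mul, ← Real.exp_add]
    exact Real.one_le_exp (by push_cast; linarith)
  calc r ^ 2 ≤ r ^ 2 * (Real.exp K * Real.exp (-t) ^ 2) := le_mul_of_one_le_right (sq_nonneg r) h1
    _ = Real.exp K * (r * Real.exp (-t)) ^ 2 := by ring

theorem two_mul_two_pi_mul_inv_div_le {h X s : ℝ} (hh : 0 < h) (hX : 0 < X) (hs : s ≤ 2 * X) :
    2 * (2 * π * s * X⁻¹ / h) ≤ 8 * π / h := by
  have hsX : s * X⁻¹ ≤ 2 := by
    rw [← div_eq_mul_inv, div_le_iff₀ hX]; exact hs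
  calc 2 * (2 * π * s * X⁻¹ / h) = 4 * π / h * (s * X⁻¹) := by ring
    _ ≤ 4 * π / h * 2 := by gcongr
    _ = 8 * π / h := by ring

theorem stmt15_general (h : ℝ) (hh : 0 < h) (μ : ℝ) (hμ : μ ∈ Set.Ico (0 : ℝ) 1)
    (B C : ℝ) (hC : 0 < C) (a : ℕ → ℂ)
    (hsum : ∀ τ : ℂ, 0 < τ.im →
      Summable (fun n : ℕ =>
        ‖a n * Complex.exp (2 * Real.pi * Complex.I * ((n : ℂ) + μ) * τ / h)‖))
    (hbd : ∀ x y : ℝ, 0 < y → y ≤ 1 →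
      ‖∑' n : ℕ,
          a n * Complex.exp (2 * Real.pi * Complex.I * ((n : ℂ) + μ) * (x + y * Complex.I) / h)‖
        ≤ C * y ^ (-B)) :
    ∃ C' > (0 : ℝ), ∀ X : ℝ, 1 ≤ X →
      ∑ n ∈ Finset.range (⌊X⌋₊ + 1), ‖a n‖ ^ 2 ≤ C' * X ^ (2 * B) := by
  refine ⟨Real.exp (8 * π / h) * C ^ 2, by positivity, fun X hX => ?_⟩
  have hX0 : 0 < X := one_pos.trans_le hX
  set t : ℕ → ℝ := fun n => ‖a n‖ * Real.exp (-(2 * π * (n + μ) * X⁻¹ / h))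
  have ht : Summable t := (hsum ((0 : ℝ) + (X⁻¹ : ℝ) * I) (by simp [hX0])).congr fun n => by
    rw [norm_mul, norm_exp_two_pi_I_mul_add_mul_I]
  have hmean : ∑' n, t n ^ 2 ≤ (C * X⁻¹ ^ (-B)) ^ 2 :=
    tsum_sq_norm_mul_exp_le hh ht fun x => by
      simpa using hbd x X⁻¹ (inv_pos.mpr hX0) (inv_le_one_of_one_le₀ hX)
  have hterm (n : ℕ) (hn : n ∈ Finset.range (⌊X⌋₊ + 1)) :
      ‖a n‖ ^ 2 ≤ Real.exp (8 * π / h) * t n ^ 2 := by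
    have hnX : (n : ℝ) ≤ X :=
      (Nat.cast_le.mpr (Finset.mem_range_succ_iff.mp hn)).trans (Nat.floor_le hX0.le)
    exact sq_le_exp_mul_sq_mul_exp_neg _ (two_mul_two_pi_mul_inv_div_le hh hX0 (by linarith [hμ.2]))
  have hX_pow : (X⁻¹ ^ (-B)) ^ 2 = X ^ (2 * B) := by
    rw [Real.inv_rpow hX0.le, Real.rpow_neg hX0.le, inv_inv, ← Real.rpow_mul_natCast hX0.le]
    push_cast
    ring_nf
  calc ∑ n ∈ Finset.range (⌊X⌋₊ + 1), ‖a n‖ ^ 2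
      ≤ Real.exp (8 * π / h) * ∑ n ∈ Finset.range (⌊X⌋₊ + 1), t n ^ 2 := by
        rw [Finset.mul_sum]; exact Finset.sum_le_sum hterm
    _ ≤ Real.exp (8 * π / h) * (C * X⁻¹ ^ (-B)) ^ 2 := by
        gcongr
        refine le_trans ?_ hmean
        exact (ht.sq_of_nonneg fun _ => by positivity).sum_le_tsum _ fun _ _ => by positivity
    _ = Real.exp (8 * π / h) * C ^ 2 * X ^ (2 * B) := by rw [mul_pow, hX_pow]; ring

theorem stmt15 (h : ℝ) (hh : 0 < h) (μ : ℝ) (hμ : μ ∈ Set.Ico (0 : ℝ) 1)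
    (B C : ℝ) (hB : 0 ≤ B) (hC : 0 < C) (a : ℕ → ℂ)
    (hsum : ∀ τ : ℂ, 0 < τ.im →
      Summable (fun n : ℕ =>
        ‖a n * Complex.exp (2 * Real.pi * Complex.I * ((n : ℂ) + μ) * τ / h)‖))
    (hbd : ∀ x y : ℝ, 0 < y → y ≤ 1 →
      ‖∑' n : ℕ,
          a n * Complex.exp (2 * Real.pi * Complex.I * ((n : ℂ) + μ) * (x + y * Complex.I) / h)‖
        ≤ C * y ^ (-B)) :
    ∃ C' > (0 : ℝ), ∀ X : ℝ, 1 ≤ X →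
      ∑ n ∈ Finset.range (⌊X⌋₊ + 1), ‖a n‖ ^ 2 ≤ C' * X ^ (2 * B) :=
  stmt15_general h hh μ hμ B C hC a hsum hbd
end

section
/- Let h > 0, μ ∈ [0,1), B ≥ 0, C > 0, and let a : ℕ → ℂ. Suppose that for every τ ∈ ℍ the series Σ_{n=0}^{∞} a_n·exp(2πi(n+μ)τ/h) converges absolutely, and let f(τ) denote its sum. Suppose |f(x+iy)| ≤ C·y^{−B} for every x ∈ ℝ and every y with 0 < y ≤ 1. Then there is a constant C′ > 0 such that |a_n| ≤ C′·(n+1)^B for every n ∈ ℕ. -/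
/-!
Writing `τ = x + iy`, the function `x ↦ f(x + iy)` is an absolutely convergent Fourier series
in `x` with coefficients `a_n exp(-2π(n+μ)y/h)`. Integrating against `exp(-2πi(n+μ)x/h)` over a
period isolates the `n`-th coefficient, so the bound `C y^{-B}` on `f` bounds it. Choosing
`y = 1/(n+1)` makes the exponential factor at most `exp(2π/h)` and `y^{-B} = (n+1)^B`.
-/

open Complex MeasureTheory
open scoped Real

lemma norm_exp_two_pi_I_mul_s16 (k : ℕ) (ν h : ℝ) (τ : ℂ) :
    ‖exp (2 * π * I * (k + ν) * τ / h)‖ = Real.exp (-(2 * π * (k + ν) * τ.im / h)) := by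
  rw [norm_exp]
  congr 1
  simp [div_ofReal_re]
  ring

lemma norm_exp_two_pi_I_mul_ofReal (k : ℕ) (ν h x : ℝ) :
    ‖exp (2 * π * I * (k + ν) * x / h)‖ = 1 := by
  simp [norm_exp_two_pi_I_mul_s16]

lemma integral_exp_two_pi_I_int_mul {h : ℝ} (hh : h ≠ 0) {m : ℤ} (hm : m ≠ 0) :
    ∫ x in (0 : ℝ)..h, exp (2 * π * I * m * x / h) = 0 := by
  have hh' : (h : ℂ) ≠ 0 := ofReal_ne_zero.2 hh
  have hc : (2 * π * I * m / h : ℂ) ≠ 0 := by simp [hm, hh, Real.pi_ne_zero]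
  have hperiod : (2 * π * I * m / h : ℂ) * h = m * (2 * π * I) := by
    field_simp
  simp_rw [fun x : ℝ => show (2 * π * I * m * x / h : ℂ) = 2 * π * I * m / h * x by ring]
  rw [integral_exp_mul_complex hc, hperiod, exp_int_mul_two_pi_mul_I]
  simp

lemma integral_exp_mul_exp_neg {h : ℝ} (hh : h ≠ 0) (ν : ℝ) (k n : ℕ) :
    ∫ x in (0 : ℝ)..h, exp (2 * π * I * (k + ν) * x / h) * exp (-(2 * π * I * (n + ν) * x / h))
      = if k = n then (h : ℂ) else 0 := by
  have hdiff : ∀ x : ℝ, exp (2 * π * I * (k + ν) * x / h) * exp (-(2 * π * I * (n + ν) * x / h))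
      = exp (2 * π * I * ((k - n : ℤ) : ℂ) * x / h) := fun x => by
    rw [← exp_add]
    push_cast
    ring_nf
  simp_rw [hdiff]
  split_ifs with hkn
  · simp [hkn]
  · exact integral_exp_two_pi_I_int_mul hh (sub_ne_zero.2 (Nat.cast_injective.ne hkn))

lemma integral_tsum_mul_exp_neg {h : ℝ} (hh : h ≠ 0) (ν : ℝ) {b : ℕ → ℂ}
    (hb : Summable fun k => ‖b k‖) (n : ℕ) :
    ∫ x in (0 : ℝ)..h,
        (∑' k : ℕ, b k * exp (2 * π * I * (k + ν) * x / h)) * exp (-(2 * π * I * (n + ν) * x / h))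
      = h * b n := by
  have hbound : ∀ k (x : ℝ),
      ‖b k * (exp (2 * π * I * (k + ν) * x / h) * exp (-(2 * π * I * (n + ν) * x / h)))‖
        = ‖b k‖ := fun k x => by
    rw [norm_mul, norm_mul, Complex.exp_neg, norm_inv, norm_exp_two_pi_I_mul_ofReal,
      norm_exp_two_pi_I_mul_ofReal, inv_one, mul_one, mul_one]
  have hsummable : ∀ x : ℝ, Summable fun k => b k * exp (2 * π * I * (k + ν) * x / h) :=
    fun x => hb.of_norm_bounded fun k => by rw [norm_mul, norm_exp_two_pi_I_mul_ofReal, mul_one]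
  have hasSum := intervalIntegral.hasSum_integral_of_dominated_convergence (μ := volume)
    (a := 0) (b := h)
    (F := fun k (x : ℝ) =>
      b k * (exp (2 * π * I * (k + ν) * x / h) * exp (-(2 * π * I * (n + ν) * x / h))))
    (f := fun x : ℝ =>
      (∑' k : ℕ, b k * exp (2 * π * I * (k + ν) * x / h)) * exp (-(2 * π * I * (n + ν) * x / h)))
    (fun k _ => ‖b k‖) (fun k => (by fun_prop : Continuous _).aestronglyMeasurable)
    (fun k => .of_forall fun x _ => (hbound k x).le)
    (.of_forall fun _ _ => hb) intervalIntegrable_const (.of_forall fun x _ => by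
      simp_rw [← mul_assoc]
      exact (hsummable x).hasSum.mul_right _)
  simp only [intervalIntegral.integral_const_mul, integral_exp_mul_exp_neg hh] at hasSum
  rw [← hasSum.tsum_eq, tsum_eq_single n fun k hk => by simp [hk], if_pos rfl, mul_comm]

lemma norm_le_of_norm_tsum_mul_exp_le {h : ℝ} (hh : h ≠ 0) (ν : ℝ) {b : ℕ → ℂ}
    (hb : Summable fun k => ‖b k‖) {M : ℝ}
    (hM : ∀ x ∈ Set.uIoc 0 h, ‖∑' k : ℕ, b k * exp (2 * π * I * (k + ν) * x / h)‖ ≤ M) (n : ℕ) :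
    ‖b n‖ ≤ M := by
  have hint := intervalIntegral.norm_integral_le_of_norm_le_const (a := 0) (b := h)
    (f := fun x : ℝ => (∑' k : ℕ, b k * exp (2 * π * I * (k + ν) * x / h)) *
      exp (-(2 * π * I * (n + ν) * x / h))) (C := M) fun x hx => by
    rw [norm_mul, Complex.exp_neg, norm_inv, norm_exp_two_pi_I_mul_ofReal, inv_one, mul_one]
    exact hM x hx
  rw [integral_tsum_mul_exp_neg hh ν hb n, norm_mul, norm_real, sub_zero, Real.norm_eq_abs] at hint
  exact le_of_mul_le_mul_left (by linarith) (abs_pos.2 hh)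

theorem stmt16_general (h : ℝ) (hh : 0 < h) (μ : ℝ) (hμ : μ ∈ Set.Ico (0 : ℝ) 1)
    (B C : ℝ) (hC : 0 < C) (a : ℕ → ℂ)
    (hsum : ∀ τ : ℂ, 0 < τ.im →
      Summable (fun n : ℕ =>
        Norm.norm (a n * Complex.exp (2 * Real.pi * Complex.I * ((n : ℂ) + μ) * τ / h))))
    (hbd : ∀ x y : ℝ, 0 < y → y ≤ 1 →
      Norm.norm (∑' n : ℕ,
          a n * Complex.exp (2 * Real.pi * Complex.I * ((n : ℂ) + μ) * (x + y * Complex.I) / h))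
        ≤ C * y ^ (-B)) :
    ∃ C' > (0 : ℝ), ∀ n : ℕ, Norm.norm (a n) ≤ C' * ((n : ℝ) + 1) ^ B := by
  refine ⟨C * Real.exp (2 * π / h), by positivity, fun n => ?_⟩
  have hn : (0 : ℝ) < n + 1 := by positivity
  set y : ℝ := ((n : ℝ) + 1)⁻¹
  have hy : 0 < y := inv_pos.2 hn
  have hcoeff := norm_le_of_norm_tsum_mul_exp_le hh.ne' μ
    (b := fun k => a k * exp (2 * π * I * (k + μ) * (y * I) / h)) (M := C * y ^ (-B))
    (by simpa using hsum (y * I) (by simpa using hy)) (fun x _ => by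
      convert hbd x y hy (inv_le_one_of_one_le₀ (by simp)) using 3
      funext k
      rw [mul_assoc, ← exp_add]
      ring_nf) n
  have hdecay : 2 * π * (n + μ) * y / h ≤ 2 * π / h := by
    have hny : (n + μ) * y ≤ 1 :=
      calc (n + μ) * y ≤ (n + 1) * y := by gcongr; linarith [hμ.2]
        _ = 1 := mul_inv_cancel₀ hn.ne'
    apply div_le_div_of_nonneg_right _ hh.le
    nlinarith [Real.pi_pos]
  have hyB : y ^ (-B) = ((n : ℝ) + 1) ^ B := by
    rw [Real.inv_rpow hn.le, Real.rpow_neg hn.le, inv_inv]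
  rw [norm_mul, norm_exp_two_pi_I_mul_s16, mul_I_im, ofReal_re, hyB] at hcoeff
  calc ‖a n‖
      = ‖a n‖ * Real.exp (-(2 * π * (n + μ) * y / h)) * Real.exp (2 * π * (n + μ) * y / h) := by
        rw [mul_assoc, ← Real.exp_add, neg_add_cancel, Real.exp_zero, mul_one]
    _ ≤ C * ((n : ℝ) + 1) ^ B * Real.exp (2 * π / h) := by gcongr
    _ = C * Real.exp (2 * π / h) * ((n : ℝ) + 1) ^ B := by ring

theorem stmt16 (h : ℝ) (hh : 0 < h) (μ : ℝ) (hμ : μ ∈ Set.Ico (0 : ℝ) 1)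
    (B C : ℝ) (hB : 0 ≤ B) (hC : 0 < C) (a : ℕ → ℂ)
    (hsum : ∀ τ : ℂ, 0 < τ.im →
      Summable (fun n : ℕ =>
        Norm.norm (a n * Complex.exp (2 * Real.pi * Complex.I * ((n : ℂ) + μ) * τ / h))))
    (hbd : ∀ x y : ℝ, 0 < y → y ≤ 1 →
      Norm.norm (∑' n : ℕ,
          a n * Complex.exp (2 * Real.pi * Complex.I * ((n : ℂ) + μ) * (x + y * Complex.I) / h))
        ≤ C * y ^ (-B)) :
    ∃ C' > (0 : ℝ), ∀ n : ℕ, Norm.norm (a n) ≤ C' * ((n : ℝ) + 1) ^ B :=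
  stmt16_general h hh μ hμ B C hC a hsum hbd
end

section
/- Let μ > 0, c ≥ 0, C > 0, and let a : ℕ → ℂ satisfy |a_n| ≤ C·(n+1)^c for all n. Let s ∈ ℂ with Re s > c + 1. Then: (i) the Dirichlet series Σ_{n=0}^{∞} a_n·(n+μ)^{−s} converges absolutely; (ii) for every y > 0 the series F(y) = Σ_{n=0}^{∞} a_n·exp(−2π(n+μ)y) converges absolutely; (iii) the function y ↦ F(y)·y^{s−1} is integrable on (0,∞) and ∫₀^∞ F(y)·y^{s−1} dy = (2π)^{−s}·Γ(s)·Σ_{n=0}^{∞} a_n·(n+μ)^{−s}. -/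
/-!
Each term integrates to a Gamma value, `∫₀^∞ e^{-2π(n+μ)y} y^{s-1} dy = (2π(n+μ))^{-s} Γ(s)`,
and the integrals of the absolute values of the terms add up to
`Γ(σ) (2π)^{-σ} ∑ |a_n| (n+μ)^{-σ}` with `σ = Re s`, which is finite because
`|a_n| (n+μ)^{-σ} ≤ C (n+1)^c (n+μ)^{-σ} ~ C (n+μ)^{c-σ}` and `σ - c > 1`. So the sum and the
integral may be interchanged. For fixed `y > 0` the bound `e^{-x} ≤ k!/x^k` with an integer
`k > c + 1` reduces the convergence of `F(y)` to that of the same Dirichlet series at `σ = k`.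
-/

open MeasureTheory Filter Asymptotics Set

lemma isEquivalent_natCast_add_const (b : ℝ) :
    (fun n : ℕ ↦ (n : ℝ) + b) ~[atTop] (fun n : ℕ ↦ (n : ℝ)) :=
  IsEquivalent.refl.add_const_of_norm_tendsto_atTop
    (tendsto_norm_atTop_atTop.comp tendsto_natCast_atTop_atTop)

lemma summable_norm_div_natCast_add_rpow {a : ℕ → ℂ} {μ c C σ : ℝ} (hμ : 0 < μ)
    (ha : ∀ n : ℕ, ‖a n‖ ≤ C * ((n : ℝ) + 1) ^ c) (hσ : c + 1 < σ) :
    Summable fun n : ℕ ↦ ‖a n‖ / ((n : ℝ) + μ) ^ σ := by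
  have hpos (n : ℕ) : 0 < (n : ℝ) + μ := by positivity
  have hequiv : (fun n : ℕ ↦ ((n : ℝ) + 1) ^ c / ((n : ℝ) + μ) ^ σ) ~[atTop]
      fun n : ℕ ↦ 1 / |(n : ℝ) + μ| ^ (σ - c) := by
    refine (((isEquivalent_natCast_add_const 1).trans
      (isEquivalent_natCast_add_const μ).symm).rpow (fun n ↦ (hpos n).le)).div
      IsEquivalent.refl |>.congr_right (Eventually.of_forall fun n ↦ ?_)
    simp only [Pi.div_apply, Pi.pow_apply, abs_of_pos (hpos n), Real.rpow_sub (hpos n),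
      one_div_div]
  have hsum := (hequiv.summable_iff_nat.mpr
    ((Real.summable_one_div_nat_add_rpow μ (σ - c)).mpr (by linarith))).mul_left C
  refine hsum.of_nonneg_of_le (fun n ↦ by positivity) fun n ↦ ?_
  rw [← mul_div_assoc]
  exact div_le_div_of_nonneg_right (ha n) (by positivity)

lemma Real.exp_neg_le_factorial_div_pow {x : ℝ} (hx : 0 < x) (k : ℕ) :
    Real.exp (-x) ≤ k.factorial / x ^ k := by
  rw [Real.exp_neg, ← inv_div]
  exact inv_anti₀ (by positivity) (Real.pow_div_factorial_le_exp _ hx.le k)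

lemma summable_norm_mul_exp_neg_mul_natCast_add {a : ℕ → ℂ} {μ c C r : ℝ} (hμ : 0 < μ)
    (ha : ∀ n : ℕ, ‖a n‖ ≤ C * ((n : ℝ) + 1) ^ c) (hr : 0 < r) :
    Summable fun n : ℕ ↦ ‖a n‖ * Real.exp (-(r * ((n : ℝ) + μ))) := by
  obtain ⟨k, hk⟩ := exists_nat_gt (c + 1)
  refine ((summable_norm_div_natCast_add_rpow hμ ha hk).mul_left
    (k.factorial / r ^ k)).of_nonneg_of_le (fun n ↦ by positivity) fun n ↦ ?_
  calc ‖a n‖ * Real.exp (-(r * ((n : ℝ) + μ)))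
      ≤ ‖a n‖ * (k.factorial / (r * ((n : ℝ) + μ)) ^ k) :=
        mul_le_mul_of_nonneg_left (Real.exp_neg_le_factorial_div_pow (by positivity) k)
          (norm_nonneg _)
    _ = k.factorial / r ^ k * (‖a n‖ / ((n : ℝ) + μ) ^ (k : ℝ)) := by
        rw [Real.rpow_natCast, mul_pow]
        ring

lemma Summable.div_const_mul_rpow {ι : Type*} {f q : ι → ℝ} {k σ : ℝ}
    (hf : Summable fun i ↦ f i / q i ^ σ) (hk : 0 ≤ k) (hq : ∀ i, 0 ≤ q i) :
    Summable fun i ↦ f i / (k * q i) ^ σ := by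
  simpa only [Real.mul_rpow hk (hq _), div_div, mul_comm] using hf.div_const (k ^ σ)

lemma norm_mul_ofReal_cpow_neg {x : ℝ} (hx : 0 < x) (z s : ℂ) :
    ‖z * (x : ℂ) ^ (-s)‖ = ‖z‖ / x ^ s.re := by
  rw [norm_mul, Complex.norm_cpow_eq_rpow_re_of_pos hx, Complex.neg_re, Real.rpow_neg hx.le,
    div_eq_mul_inv]

lemma MeasureTheory.integrable_tsum_of_summable_integral_norm {α E ι : Type*}
    [MeasurableSpace α] {ν : Measure α} [NormedAddCommGroup E] [CompleteSpace E] [Countable ι]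
    {F : ι → α → E} (hF_int : ∀ i, Integrable (F i) ν)
    (hF_sum : Summable fun i ↦ ∫ x, ‖F i x‖ ∂ν) :
    Integrable (fun x ↦ ∑' i, F i x) ν := by
  have hmeas (i : ι) : AEMeasurable (fun x ↦ ‖F i x‖ₑ) ν := (hF_int i).aestronglyMeasurable.enorm
  have hfin : ∫⁻ x, ∑' i, ‖F i x‖ₑ ∂ν ≠ ⊤ := by
    rw [lintegral_tsum hmeas, ← funext fun i ↦ ofReal_integral_norm_eq_lintegral_enorm (hF_int i),
      ← ENNReal.ofReal_tsum_of_nonneg (fun i ↦ integral_nonneg fun _ ↦ norm_nonneg _) hF_sum]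
    exact ENNReal.ofReal_ne_top
  have hsum : ∀ᵐ x ∂ν, Summable fun i ↦ F i x := by
    filter_upwards [ae_lt_top' (AEMeasurable.tsum hmeas) hfin] with x hx
    exact .of_nnnorm (ENNReal.tsum_coe_ne_top_iff_summable.mp hx.ne)
  refine ⟨aestronglyMeasurable_of_tendsto_ae atTop (f := fun t x ↦ ∑ i ∈ t, F i x)
    (fun t ↦ Finset.aestronglyMeasurable_fun_sum t fun i _ ↦ (hF_int i).aestronglyMeasurable) ?_,
    ?_⟩
  · filter_upwards [hsum] with x hx
    exact hx.hasSum
  · exact (lintegral_mono fun x ↦ enorm_tsum_le_tsum_enorm).trans_lt hfin.lt_top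

section MellinTransform

variable {s : ℂ} {r : ℝ}

lemma norm_cpow_mul_exp_neg_mul {t : ℝ} (ht : 0 < t) :
    ‖(t : ℂ) ^ (s - 1) * Real.exp (-r * t)‖ = t ^ (s.re - 1) * Real.exp (-(r * t)) := by
  rw [norm_mul, Complex.norm_cpow_eq_rpow_re_of_pos ht, Complex.norm_real, Real.norm_of_nonneg
    (Real.exp_pos _).le, Complex.sub_re, Complex.one_re, neg_mul]

lemma integrableOn_cpow_mul_exp_neg_mul_Ioi (hs : 0 < s.re) (hr : 0 < r) :
    IntegrableOn (fun t : ℝ ↦ (t : ℂ) ^ (s - 1) * Real.exp (-r * t)) (Ioi 0) := by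
  refine (integrableOn_rpow_mul_exp_neg_mul_rpow (p := 1) (s := s.re - 1) (by linarith) one_pos
    hr).mono' ?_ ?_
  · refine ContinuousOn.aestronglyMeasurable (fun t ht ↦ ?_) measurableSet_Ioi
    exact ((Complex.continuousAt_ofReal_cpow_const _ _ (Or.inr (ne_of_gt ht))).mul
      (by fun_prop)).continuousWithinAt
  · filter_upwards [ae_restrict_mem measurableSet_Ioi] with t ht
    rw [norm_cpow_mul_exp_neg_mul ht, Real.rpow_one, neg_mul]

lemma integral_norm_cpow_mul_exp_neg_mul_Ioi (hs : 0 < s.re) (hr : 0 < r) :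
    ∫ t : ℝ in Ioi 0, ‖(t : ℂ) ^ (s - 1) * Real.exp (-r * t)‖ =
      (1 / r) ^ s.re * Real.Gamma s.re := by
  rw [← Real.integral_rpow_mul_exp_neg_mul_Ioi hs hr]
  exact setIntegral_congr_fun measurableSet_Ioi fun t ht ↦ norm_cpow_mul_exp_neg_mul ht

lemma mellinConvergent_of_hasSum {ι : Type*} [Countable ι] {a : ι → ℂ} {p : ι → ℝ}
    {F : ℝ → ℂ} (hp : ∀ i, 0 < p i) (hs : 0 < s.re)
    (hF : ∀ t ∈ Ioi 0, HasSum (fun i ↦ a i * Real.exp (-p i * t)) (F t))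
    (h_sum : Summable fun i ↦ ‖a i‖ / p i ^ s.re) :
    MellinConvergent F s := by
  have hnorm (i : ι) : ∫ t : ℝ in Ioi 0, ‖a i * ((t : ℂ) ^ (s - 1) * Real.exp (-p i * t))‖ =
      ‖a i‖ / p i ^ s.re * Real.Gamma s.re := by
    simp only [norm_mul (a i), integral_const_mul,
      integral_norm_cpow_mul_exp_neg_mul_Ioi hs (hp i), one_div, Real.inv_rpow (hp i).le]
    ring
  refine (integrable_tsum_of_summable_integral_norm
    (fun i ↦ (integrableOn_cpow_mul_exp_neg_mul_Ioi hs (hp i)).const_mul (a i))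
    (by simpa only [hnorm] using h_sum.mul_right _)).congr ?_
  filter_upwards [ae_restrict_mem measurableSet_Ioi] with t ht
  rw [← (hF t ht).tsum_eq, smul_eq_mul, ← tsum_mul_left]
  exact tsum_congr fun i ↦ by ring

lemma hasSum_mellin_const_mul {ι : Type*} [Countable ι] {a : ι → ℂ} {q : ι → ℝ} {F : ℝ → ℂ}
    {k : ℝ} (hk : 0 < k) (hq : ∀ i, 0 < q i) (hs : 0 < s.re)
    (hF : ∀ t ∈ Ioi 0, HasSum (fun i ↦ a i * Real.exp (-(k * q i) * t)) (F t))
    (h_sum : Summable fun i ↦ ‖a i‖ / q i ^ s.re) :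
    HasSum (fun i ↦ (k : ℂ) ^ (-s) * Complex.Gamma s * (a i * (q i : ℂ) ^ (-s))) (mellin F s) := by
  convert hasSum_mellin (fun i ↦ Or.inr (mul_pos hk (hq i))) hs hF
    (h_sum.div_const_mul_rpow hk.le fun i ↦ (hq i).le) using 1
  ext i
  rw [Complex.ofReal_mul, Complex.mul_cpow_ofReal_nonneg hk.le (hq i).le, Complex.cpow_neg,
    Complex.cpow_neg]
  field_simp

end MellinTransform

theorem stmt17_general (μ : ℝ) (hμ : 0 < μ) (c C : ℝ) (hc : 0 ≤ c)
    (a : ℕ → ℂ) (ha : ∀ n : ℕ, ‖a n‖ ≤ C * ((n : ℝ) + 1) ^ c)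
    (s : ℂ) (hs : c + 1 < s.re) :
    Summable (fun n : ℕ => ‖a n * ((n : ℂ) + μ) ^ (-s)‖) ∧
    (∀ y : ℝ, 0 < y →
      Summable (fun n : ℕ =>
        ‖a n * Complex.exp (-(2 * Real.pi * ((n : ℂ) + μ) * y))‖)) ∧
    IntegrableOn
      (fun y : ℝ =>
        (∑' n : ℕ, a n * Complex.exp (-(2 * Real.pi * ((n : ℂ) + μ) * y))) * (y : ℂ) ^ (s - 1))
      (Set.Ioi (0 : ℝ)) ∧
    ∫ y in Set.Ioi (0 : ℝ),
        (∑' n : ℕ, a n * Complex.exp (-(2 * Real.pi * ((n : ℂ) + μ) * y))) * (y : ℂ) ^ (s - 1)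
      = ((2 * Real.pi : ℝ) : ℂ) ^ (-s) * Complex.Gamma s
          * ∑' n : ℕ, a n * ((n : ℂ) + μ) ^ (-s) := by
  have hs₀ : 0 < s.re := by linarith
  have hq (n : ℕ) : 0 < (n : ℝ) + μ := by positivity
  have hexp (n : ℕ) (y : ℝ) : Complex.exp (-(2 * Real.pi * ((n : ℂ) + μ) * y)) =
      Real.exp (-(2 * Real.pi * ((n : ℝ) + μ)) * y) := by
    push_cast
    ring_nf
  have hD := summable_norm_div_natCast_add_rpow hμ ha (σ := s.re) (by linarith)
  have hE (y : ℝ) (hy : 0 < y) :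
      Summable fun n : ℕ ↦ ‖a n * Complex.exp (-(2 * Real.pi * ((n : ℂ) + μ) * y))‖ := by
    refine (summable_norm_mul_exp_neg_mul_natCast_add hμ ha (r := 2 * Real.pi * y)
      (by positivity)).congr fun n ↦ ?_
    rw [hexp, norm_mul, Complex.norm_real, Real.norm_of_nonneg (Real.exp_pos _).le]
    ring_nf
  have hF (t : ℝ) (ht : t ∈ Ioi 0) :
      HasSum (fun n ↦ a n * Real.exp (-(2 * Real.pi * ((n : ℝ) + μ)) * t))
        (∑' n : ℕ, a n * Complex.exp (-(2 * Real.pi * ((n : ℂ) + μ) * t))) := by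
    simpa only [hexp] using (hE t ht).of_norm.hasSum
  refine ⟨hD.congr fun n ↦ ?_, hE, ?_, ?_⟩
  · exact_mod_cast (norm_mul_ofReal_cpow_neg (hq n) (a n) s).symm
  · simpa only [MellinConvergent, smul_eq_mul, mul_comm] using
      mellinConvergent_of_hasSum (fun n ↦ by positivity) hs₀ hF
        (hD.div_const_mul_rpow Real.two_pi_pos.le fun n ↦ (hq n).le)
  · have hmellin := (hasSum_mellin_const_mul Real.two_pi_pos hq hs₀ hF hD).tsum_eq
    simp only [mellin, smul_eq_mul, Complex.ofReal_add, Complex.ofReal_natCast] at hmellin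
    rw [← tsum_mul_left, hmellin]
    simp only [mul_comm]

theorem stmt17 (μ : ℝ) (hμ : 0 < μ) (c C : ℝ) (hc : 0 ≤ c) (hC : 0 < C)
    (a : ℕ → ℂ) (ha : ∀ n : ℕ, ‖a n‖ ≤ C * ((n : ℝ) + 1) ^ c)
    (s : ℂ) (hs : c + 1 < s.re) :
    Summable (fun n : ℕ => ‖a n * ((n : ℂ) + μ) ^ (-s)‖) ∧
    (∀ y : ℝ, 0 < y →
      Summable (fun n : ℕ =>
        ‖a n * Complex.exp (-(2 * Real.pi * ((n : ℂ) + μ) * y))‖)) ∧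
    IntegrableOn
      (fun y : ℝ =>
        (∑' n : ℕ, a n * Complex.exp (-(2 * Real.pi * ((n : ℂ) + μ) * y))) * (y : ℂ) ^ (s - 1))
      (Set.Ioi (0 : ℝ)) ∧
    ∫ y in Set.Ioi (0 : ℝ),
        (∑' n : ℕ, a n * Complex.exp (-(2 * Real.pi * ((n : ℂ) + μ) * y))) * (y : ℂ) ^ (s - 1)
      = ((2 * Real.pi : ℝ) : ℂ) ^ (-s) * Complex.Gamma s
          * ∑' n : ℕ, a n * ((n : ℂ) + μ) ^ (-s) :=
  stmt17_general μ hμ c C hc a ha s hs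
end
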